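/- arXiv:1801.05137 — 3 statements merged into one kernel-verified Lean document; each statement's English description precedes it below -/
import Mathlib

section
/- For the cycle C_n on n ≥ 3 vertices, χ_d^t(C(C_n)) = ⌊2n/3⌋ + 1 if n ≡ 0 (mod 3) and n ≠ 3, and χ_d^t(C(C_n)) = ⌊2n/3⌋ + 2 otherwise. -/
open SimpleGraph

/-- The central graph `C(G)`: subdivide each edge of `G` once (vertex `c_e` for each
edge `e`) and join all non-adjacent pairs of original vertices. -/
def centralGraph {V : Type*} (G : SimpleGraph V) : SimpleGraph (V ⊕ G.edgeSet) where
  Adj x y :=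
    match x, y with
    | Sum.inl u, Sum.inl v => u ≠ v ∧ ¬ G.Adj u v
    | Sum.inl u, Sum.inr e => u ∈ (e : Sym2 V)
    | Sum.inr e, Sum.inl u => u ∈ (e : Sym2 V)
    | Sum.inr _, Sum.inr _ => False
  symm := by
    constructor
    rintro (u | e) (v | f) h
    · exact ⟨h.1.symm, fun a => h.2 a.symm⟩
    · exact h
    · exact h
    · exact h
  loopless := by
    constructor
    rintro (u | e) h
    · exact h.1 rfl
    · exact h

/-- `f` is a total dominator coloring of `G`: a proper coloring such that every
vertex is adjacent to all vertices of some (nonempty) color class. -/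
def IsTDColoring {V : Type*} (G : SimpleGraph V) (f : V → ℕ) : Prop :=
  (∀ u v, G.Adj u v → f u ≠ f v) ∧
  ∀ v, ∃ c, (∃ w, f w = c) ∧ ∀ w, f w = c → G.Adj v w

/-- Total dominator chromatic number: minimum number of colors in a TDC. -/
noncomputable def tdcn {V : Type*} (G : SimpleGraph V) : ℕ :=
  sInf {k | ∃ f : V → ℕ, IsTDColoring G f ∧ ∀ v, f v < k}

/-- Total domination number. -/
noncomputable def tdn {V : Type*} (G : SimpleGraph V) : ℕ :=
  sInf {k | ∃ S : Set V, S.ncard = k ∧ ∀ v, ∃ u ∈ S, G.Adj v u}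

/-- The join of two graphs. -/
def joinGraph {α β : Type*} (G : SimpleGraph α) (H : SimpleGraph β) :
    SimpleGraph (α ⊕ β) where
  Adj x y :=
    match x, y with
    | Sum.inl u, Sum.inl v => G.Adj u v
    | Sum.inr u, Sum.inr v => H.Adj u v
    | Sum.inl _, Sum.inr _ => True
    | Sum.inr _, Sum.inl _ => True
  symm := by constructor; rintro (u | u) (v | v) h <;> first | exact h.symm | trivial
  loopless := by constructor; rintro (u | u) h <;> exact h.ne rfl

/-- The path graph on `n` vertices. -/
def pathG (n : ℕ) : SimpleGraph (Fin n) :=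
  SimpleGraph.fromRel (fun i j => (i : ℕ) + 1 = (j : ℕ))

/-- The cycle graph on `n` vertices. -/
def cycleG (n : ℕ) : SimpleGraph (ZMod n) :=
  SimpleGraph.fromRel (fun i j => i - j = 1)

/-- The double star `S_{1,n,n}`: center `0`, support vertices `1,...,n`
(adjacent to the center), each `i` with its own pendant `n+i`. -/
def doubleStar (n : ℕ) : SimpleGraph (Fin (2 * n + 1)) :=
  SimpleGraph.fromRel (fun a b =>
    ((a : ℕ) = 0 ∧ 1 ≤ (b : ℕ) ∧ (b : ℕ) ≤ n) ∨
    (1 ≤ (a : ℕ) ∧ (a : ℕ) ≤ n ∧ (b : ℕ) = (a : ℕ) + n))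

/-- The disjoint union of a family of graphs. -/
def sigmaGraph {ι : Type*} {V : ι → Type*} (G : ∀ i, SimpleGraph (V i)) :
    SimpleGraph (Σ i, V i) :=
  SimpleGraph.fromRel (fun x y =>
    ∃ (i : ι) (u v : V i), (G i).Adj u v ∧ x = ⟨i, u⟩ ∧ y = ⟨i, v⟩)
namespace TDC

lemma cycleG_adj {n : ℕ} (a b : ZMod n) :
    (cycleG n).Adj a b ↔ a ≠ b ∧ (a - b = 1 ∨ b - a = 1) := by simp [cycleG]

lemma central_inl_inl {V : Type*} (G : SimpleGraph V) (u v : V) :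
    (centralGraph G).Adj (Sum.inl u) (Sum.inl v) ↔ u ≠ v ∧ ¬ G.Adj u v := Iff.rfl

lemma central_inl_inr {V : Type*} (G : SimpleGraph V) (u : V) (e : G.edgeSet) :
    (centralGraph G).Adj (Sum.inl u) (Sum.inr e) ↔ u ∈ (e : Sym2 V) := Iff.rfl

lemma central_inr_inl {V : Type*} (G : SimpleGraph V) (u : V) (e : G.edgeSet) :
    (centralGraph G).Adj (Sum.inr e) (Sum.inl u) ↔ u ∈ (e : Sym2 V) := Iff.rfl

lemma central_inr_inr {V : Type*} (G : SimpleGraph V) (e e' : G.edgeSet) :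
    ¬ (centralGraph G).Adj (Sum.inr e) (Sum.inr e') := fun h => h

lemma zmod_cast_ne_zero {n k : ℕ} (h0 : 0 < k) (hk : k < n) : (k : ZMod n) ≠ 0 := by
  intro h
  rw [ZMod.natCast_eq_zero_iff] at h
  exact absurd (Nat.le_of_dvd h0 h) (by omega)

lemma one_ne_zero' {n : ℕ} (hn : 2 ≤ n) : (1 : ZMod n) ≠ 0 := by
  have := zmod_cast_ne_zero (n := n) (k := 1) one_pos (by omega)
  simpa using this

lemma eq_iff_val_eq {n : ℕ} [NeZero n] (a b : ZMod n) : a = b ↔ a.val = b.val :=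
  ⟨fun h => h ▸ rfl, fun h => ZMod.val_injective n h⟩

lemma val_add_one {n : ℕ} (hn : 2 ≤ n) (a : ZMod n) :
    (a + 1).val = (a.val + 1) % n := by
  haveI : NeZero n := ⟨by omega⟩
  haveI : Fact (1 < n) := ⟨by omega⟩
  rw [ZMod.val_add, ZMod.val_one]

lemma eq_add_one_iff {n : ℕ} (hn : 2 ≤ n) (a b : ZMod n) :
    a = b + 1 ↔ a.val = (b.val + 1) % n := by
  haveI : NeZero n := ⟨by omega⟩
  rw [eq_iff_val_eq, val_add_one hn]

lemma cycleG_adj_iff {n : ℕ} (hn : 2 ≤ n) (a b : ZMod n) :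
    (cycleG n).Adj a b ↔ (a = b + 1 ∨ b = a + 1) := by
  rw [cycleG_adj]
  constructor
  · rintro ⟨hne, h | h⟩
    · left; rw [sub_eq_iff_eq_add] at h; rw [h, add_comm]
    · right; rw [sub_eq_iff_eq_add] at h; rw [h, add_comm]
  · rintro (h | h)
    · refine ⟨?_, Or.inl (by rw [h]; ring)⟩
      rw [h]; intro hc
      exact one_ne_zero' hn (by linear_combination hc)
    · refine ⟨?_, Or.inr (by rw [h]; ring)⟩
      rw [h]; intro hc
      exact one_ne_zero' hn (by linear_combination -hc)

lemma cycleG_adj_val {n : ℕ} (hn : 2 ≤ n) (a b : ZMod n) :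
    (cycleG n).Adj a b ↔ (a.val = (b.val + 1) % n ∨ b.val = (a.val + 1) % n) := by
  rw [cycleG_adj_iff hn, eq_add_one_iff hn, eq_add_one_iff hn]

lemma edge_mem {n : ℕ} (hn : 2 ≤ n) (i : ZMod n) : s(i, i + 1) ∈ (cycleG n).edgeSet := by
  rw [SimpleGraph.mem_edgeSet, cycleG_adj_iff hn]
  right; rfl

lemma mem_edge_iff {n : ℕ} (u i : ZMod n) : u ∈ (s(i, i+1) : Sym2 (ZMod n)) ↔ u = i ∨ u = i + 1 :=
  Sym2.mem_iff

lemma edge_cases {n : ℕ} (hn : 2 ≤ n) (e : (cycleG n).edgeSet) :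
    ∃ i : ZMod n, (e : Sym2 (ZMod n)) = s(i, i + 1) := by
  obtain ⟨e, he⟩ := e
  induction e with
  | _ a b =>
    rw [SimpleGraph.mem_edgeSet, cycleG_adj_iff hn] at he
    rcases he with h | h
    · subst h; exact ⟨b, Sym2.eq_swap⟩
    · subst h; exact ⟨a, rfl⟩

end TDC

namespace TDC

lemma two_ne_zero' {n : ℕ} (hn : 3 ≤ n) : (2 : ZMod n) ≠ 0 := by
  have := zmod_cast_ne_zero (n := n) (k := 2) (by omega) (by omega)
  simpa using this

lemma three_ne_zero' {n : ℕ} (hn : 4 ≤ n) : (3 : ZMod n) ≠ 0 := by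
  have := zmod_cast_ne_zero (n := n) (k := 3) (by omega) (by omega)
  simpa using this

theorem lower_bound (n k : ℕ) (hn : 4 ≤ n) (f : ZMod n ⊕ (cycleG n).edgeSet → ℕ)
    (hf : IsTDColoring (centralGraph (cycleG n)) f) (hk : ∀ v, f v < k) :
    (if n % 3 = 0 then 2 * n / 3 + 1 else 2 * n / 3 + 2) ≤ k := by
  classical
  haveI : NeZero n := ⟨by omega⟩
  have hn2 : 2 ≤ n := by omega
  obtain ⟨hprop, hdom⟩ := hf
  have h1z : (1 : ZMod n) ≠ 0 := one_ne_zero' hn2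
  have h2z : (2 : ZMod n) ≠ 0 := two_ne_zero' (by omega)
  have h3z : (3 : ZMod n) ≠ 0 := three_ne_zero' hn
  have hcons : ∀ a b : ZMod n, a ≠ b → f (Sum.inl a) = f (Sum.inl b) →
      (b = a + 1 ∨ a = b + 1) := by
    intro a b hne heq
    by_contra hcyc
    push_neg at hcyc
    refine hprop (Sum.inl a) (Sum.inl b) ?_ heq
    rw [central_inl_inl, cycleG_adj_iff hn2]
    exact ⟨hne, fun h => h.elim (fun h' => hcyc.2 h') (fun h' => hcyc.1 h')⟩
  set O : ℕ → Finset (ZMod n) := fun c => Finset.univ.filter (fun j => f (Sum.inl j) = c)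
    with hO
  have hOmem : ∀ c (j : ZMod n), j ∈ O c ↔ f (Sum.inl j) = c := by
    intro c j; simp [hO]
  set D : Finset ℕ := (Finset.range k).filter
    (fun c => (O c).Nonempty ∧ ∀ e : (cycleG n).edgeSet, f (Sum.inr e) ≠ c) with hD
  have hDmem : ∀ c, c ∈ D ↔
      (c < k ∧ (O c).Nonempty ∧ ∀ e : (cycleG n).edgeSet, f (Sum.inr e) ≠ c) := by
    intro c; simp [hD]
  -- structure of classes in D
  have key : ∀ c ∈ D, ∃ j : ZMod n, O c = {j} ∨ O c = {j, j + 1} := by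
    intro c hc
    obtain ⟨a, ha⟩ := ((hDmem c).mp hc).2.1
    by_cases hs : O c = {a}
    · exact ⟨a, Or.inl hs⟩
    · have hex : ∃ b ∈ O c, b ≠ a := by
        by_contra hcon
        push_neg at hcon
        exact hs (Finset.eq_singleton_iff_unique_mem.mpr ⟨ha, hcon⟩)
      obtain ⟨b, hb, hba⟩ := hex
      have hab := hcons a b (Ne.symm hba) (((hOmem c a).mp ha).trans (((hOmem c b).mp hb).symm))
      have hsub : ∀ x ∈ O c, x = a ∨ x = b := by
        intro x hx
        by_contra hcon
        push_neg at hcon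
        have hxa := hcons a x (fun h => hcon.1 h.symm)
          (((hOmem c a).mp ha).trans (((hOmem c x).mp hx).symm))
        have hxb := hcons b x (fun h => hcon.2 h.symm)
          (((hOmem c b).mp hb).trans (((hOmem c x).mp hx).symm))
        rcases hab with h | h
        · rcases hxa with h' | h'
          · exact hcon.2 (h'.trans h.symm)
          · rcases hxb with h'' | h''
            · exact h3z (by linear_combination -h - h' - h'')
            · exact h1z (by linear_combination -h - h' + h'')
        · rcases hxa with h' | h'
          · rcases hxb with h'' | h''
            · exact h1z (by linear_combination -h - h' + h'')
            · exact h3z (by linear_combination -h - h' - h'')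
          · exact hcon.2 (by linear_combination h - h')
      have hOab : O c = {a, b} := by
        apply Finset.Subset.antisymm
        · intro x hx
          rcases hsub x hx with h | h <;> simp [h]
        · intro x hx
          rcases Finset.mem_insert.mp hx with h | h
          · exact h ▸ ha
          · exact (Finset.mem_singleton.mp h) ▸ hb
      rcases hab with h | h
      · exact ⟨a, Or.inr (by rw [hOab, h])⟩
      · exact ⟨b, Or.inr (by rw [hOab, h]; exact Finset.pair_comm _ _)⟩
  have hne_succ : ∀ j : ZMod n, j ≠ j + 1 := by
    intro j h
    exact h1z (by linear_combination -h)
  have hdich : ∀ c ∈ D, (O c).card = 1 ∨ (O c).card = 2 := by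
    intro c hc
    obtain ⟨j, h | h⟩ := key c hc
    · left; rw [h]; exact Finset.card_singleton j
    · right; rw [h]; exact Finset.card_pair (hne_succ j)
  set sfin : Finset ℕ := D.filter (fun c => (O c).card = 1) with hsfin
  set pfin : Finset ℕ := D.filter (fun c => (O c).card = 2) with hpfin
  have hDsplit : pfin = D.filter (fun c => ¬ (O c).card = 1) := by
    apply Finset.filter_congr
    intro c hc
    rcases hdich c hc with h | h <;> simp [h]
  have hcard_union : sfin.card + pfin.card = D.card := by
    rw [hDsplit]
    exact Finset.card_filter_add_card_filter_not _
  -- dominating classes for subdivision vertices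
  have hedge : ∀ i : ZMod n, s(i, i + 1) ∈ (cycleG n).edgeSet := edge_mem hn2
  choose g hg1 hg2 using fun i : ZMod n => hdom (Sum.inr ⟨s(i, i + 1), hedge i⟩)
  have hgO : ∀ (i u : ZMod n), f (Sum.inl u) = g i → u = i ∨ u = i + 1 := by
    intro i u h
    exact (mem_edge_iff u i).mp ((central_inr_inl _ _ _).mp (hg2 i _ h))
  have hgpure : ∀ i (e : (cycleG n).edgeSet), f (Sum.inr e) ≠ g i :=
    fun i e h => central_inr_inr _ _ _ (hg2 i _ h)
  have hgne : ∀ i, (O (g i)).Nonempty := by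
    intro i
    obtain ⟨w, hw⟩ := hg1 i
    match w with
    | Sum.inl u => exact ⟨u, (hOmem _ u).mpr hw⟩
    | Sum.inr e => exact absurd hw (hgpure i e)
  have hgD : ∀ i, g i ∈ D := by
    intro i
    rw [hDmem]
    refine ⟨?_, hgne i, fun e => hgpure i e⟩
    obtain ⟨u, hu⟩ := hgne i
    exact (hOmem _ u).mp hu ▸ hk (Sum.inl u)
  -- coverage count
  have hcov : (Finset.univ : Finset (ZMod n)).card
      = ∑ c ∈ D, (Finset.univ.filter (fun i => g i = c)).card :=
    Finset.card_eq_sum_card_fiberwise (fun i _ => hgD i)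
  have hfib : ∀ c ∈ D, (Finset.univ.filter (fun i => g i = c)).card
      ≤ (if (O c).card = 1 then 2 else 1) := by
    intro c hc
    obtain ⟨j, hj | hj⟩ := key c hc
    · rw [if_pos (by rw [hj]; exact Finset.card_singleton j)]
      have hsub2 : Finset.univ.filter (fun i => g i = c) ⊆ ({j - 1, j} : Finset (ZMod n)) := by
        intro i hi
        have hgi : g i = c := (Finset.mem_filter.mp hi).2
        have hjO : j ∈ O (g i) := by rw [hgi, hj]; exact Finset.mem_singleton_self j
        rcases hgO i j ((hOmem _ j).mp hjO) with h | h
        · exact Finset.mem_insert.mpr (Or.inr (Finset.mem_singleton.mpr h.symm))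
        · exact Finset.mem_insert.mpr (Or.inl (by rw [h]; ring))
      exact (Finset.card_le_card hsub2).trans ((Finset.card_insert_le _ _).trans (by simp))
    · rw [if_neg (by rw [hj, Finset.card_pair (hne_succ j)]; omega)]
      have hsub2 : Finset.univ.filter (fun i => g i = c) ⊆ ({j} : Finset (ZMod n)) := by
        intro i hi
        have hgi : g i = c := (Finset.mem_filter.mp hi).2
        have hjO : j ∈ O (g i) := by rw [hgi, hj]; exact Finset.mem_insert_self _ _
        have hj1O : j + 1 ∈ O (g i) := by
          rw [hgi, hj]; exact Finset.mem_insert_of_mem (Finset.mem_singleton_self _)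
        rw [Finset.mem_singleton]
        rcases hgO i j ((hOmem _ j).mp hjO) with h | h
        · exact h.symm
        · rcases hgO i (j + 1) ((hOmem _ (j + 1)).mp hj1O) with h' | h'
          · exact absurd (show (2 : ZMod n) = 0 by linear_combination h' - h) h2z
          · exact absurd (show (1 : ZMod n) = 0 by linear_combination h' - h) h1z
      exact (Finset.card_le_card hsub2).trans (by simp)
  have hcov2 : n ≤ 2 * sfin.card + pfin.card := by
    have h1 : (Finset.univ : Finset (ZMod n)).card = n := by
      rw [Finset.card_univ, ZMod.card]
    have h2 : ∑ c ∈ D, (if (O c).card = 1 then (2:ℕ) else 1)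
        = 2 * sfin.card + pfin.card := by
      rw [Finset.sum_ite, Finset.sum_const, Finset.sum_const, smul_eq_mul, smul_eq_mul,
        ← hDsplit, ← hsfin]
      omega
    calc n = (Finset.univ : Finset (ZMod n)).card := h1.symm
      _ = ∑ c ∈ D, (Finset.univ.filter (fun i => g i = c)).card := hcov
      _ ≤ ∑ c ∈ D, (if (O c).card = 1 then 2 else 1) := Finset.sum_le_sum hfib
      _ = 2 * sfin.card + pfin.card := h2
  -- partition of original vertices
  set L : Finset (ZMod n) := Finset.univ.filter (fun j => f (Sum.inl j) ∉ D) with hL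
  have hLmem : ∀ j : ZMod n, j ∈ L ↔ f (Sum.inl j) ∉ D := by intro j; simp [hL]
  have hpart : n = sfin.card + 2 * pfin.card + L.card := by
    have hsplitn : (Finset.univ.filter (fun j : ZMod n => f (Sum.inl j) ∈ D)).card + L.card
        = n := by
      rw [hL, Finset.card_filter_add_card_filter_not, Finset.card_univ, ZMod.card]
    have hs0 : (Finset.univ.filter (fun j : ZMod n => f (Sum.inl j) ∈ D)).card
        = ∑ c ∈ D, (O c).card := by
      rw [Finset.card_eq_sum_card_fiberwise
        (s := Finset.univ.filter (fun j : ZMod n => f (Sum.inl j) ∈ D))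
        (f := fun j => f (Sum.inl j)) (t := D) (fun x hx => (Finset.mem_filter.mp hx).2)]
      refine Finset.sum_congr rfl (fun c hc => ?_)
      congr 1
      ext j
      simp only [Finset.mem_filter, Finset.mem_univ, true_and, hOmem]
      exact ⟨fun h => h.2, fun h => ⟨h ▸ hc, h⟩⟩
    have hsum : ∑ c ∈ D, (O c).card = sfin.card + 2 * pfin.card := by
      have : ∑ c ∈ D, (O c).card = ∑ c ∈ D, (if (O c).card = 1 then (1:ℕ) else 2) := by
        refine Finset.sum_congr rfl (fun c hc => ?_)
        rcases hdich c hc with h | h <;> simp [h]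
      rw [this, Finset.sum_ite, Finset.sum_const, Finset.sum_const, smul_eq_mul, smul_eq_mul,
        ← hDsplit, ← hsfin]
      omega
    omega
  -- no two consecutive leftover vertices
  have hNC : ∀ j : ZMod n, j ∈ L → j + 1 ∈ L → False := by
    intro j hj hj1
    obtain ⟨a, ha⟩ := hgne j
    have haj := hgO j a ((hOmem _ a).mp ha)
    have haD : f (Sum.inl a) ∈ D := ((hOmem _ a).mp ha) ▸ hgD j
    rcases haj with h | h
    · exact (hLmem a).mp (h ▸ hj) haD
    · exact (hLmem a).mp (h ▸ hj1) haD
  -- leftover colors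
  set LC : Finset ℕ := L.image (fun j => f (Sum.inl j)) with hLC
  have hLCcard : LC.card = L.card := by
    apply Finset.card_image_of_injOn
    intro a ha b hb hab
    by_contra hne
    rcases hcons a b hne hab with h | h
    · exact hNC a (Finset.mem_coe.mp ha) (h ▸ Finset.mem_coe.mp hb)
    · exact hNC b (Finset.mem_coe.mp hb) (h ▸ Finset.mem_coe.mp ha)
  have hdisj : Disjoint D LC := by
    rw [Finset.disjoint_left]
    intro c hcD hcLC
    obtain ⟨j, hjL, hje⟩ := Finset.mem_image.mp hcLC
    exact (hLmem j).mp hjL (hje ▸ hcD)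
  have hDk : D ⊆ Finset.range k := Finset.filter_subset _ _
  have hLCk : LC ⊆ Finset.range k := by
    intro c hc
    obtain ⟨j, _, hje⟩ := Finset.mem_image.mp hc
    exact Finset.mem_range.mpr (hje ▸ hk (Sum.inl j))
  have hDLcard : (D ∪ LC).card = sfin.card + pfin.card + L.card := by
    rw [Finset.card_union_of_disjoint hdisj, hLCcard, ← hcard_union]
  rcases Nat.lt_or_ge L.card 2 with hr | hr
  · -- at most one leftover vertex: one extra color for subdivision vertices
    have hex : ∃ ℓ : ZMod n, ∀ j ∈ L, j = ℓ := by
      have hr' : L.card = 0 ∨ L.card = 1 := by omega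
      rcases hr' with h | h
      · exact ⟨0, fun j hj => absurd hj (by rw [Finset.card_eq_zero.mp h]; simp)⟩
      · obtain ⟨ℓ, hLs⟩ := Finset.card_eq_one.mp h
        exact ⟨ℓ, fun j hj => Finset.mem_singleton.mp (hLs ▸ hj)⟩
    obtain ⟨ℓ, hℓ⟩ := hex
    set x := f (Sum.inr ⟨s(ℓ, ℓ + 1), hedge ℓ⟩) with hx
    have hxD : x ∉ D := fun h => ((hDmem x).mp h).2.2 _ rfl
    have hxLC : x ∉ LC := by
      intro h
      obtain ⟨j, hjL, hje⟩ := Finset.mem_image.mp h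
      have hjℓ := hℓ j hjL
      refine hprop (Sum.inl ℓ) (Sum.inr ⟨s(ℓ, ℓ + 1), hedge ℓ⟩) ?_ ?_
      · exact (mem_edge_iff ℓ ℓ).mpr (Or.inl rfl)
      · rw [← hx, ← hje, hjℓ]
    have hfinal : sfin.card + pfin.card + L.card + 1 ≤ k := by
      have hsub3 : insert x (D ∪ LC) ⊆ Finset.range k := by
        intro c hc
        rcases Finset.mem_insert.mp hc with h | h
        · exact Finset.mem_range.mpr (h ▸ hx ▸ hk _)
        · exact (Finset.union_subset hDk hLCk) h
      have hcard3 := Finset.card_le_card hsub3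
      rw [Finset.card_insert_of_notMem (by simp [hxD, hxLC]), hDLcard,
        Finset.card_range] at hcard3
      omega
    obtain ⟨S, P, R, hA, hB, hC⟩ : ∃ S P R : ℕ, n ≤ 2*S+P ∧ n = S+2*P+R ∧ R ≤ 1 ∧ S+P+R+1 ≤ k :=
      ⟨sfin.card, pfin.card, L.card, hcov2, hpart, by omega, hfinal⟩
    split_ifs with h3 <;> omega
  · have hfinal : sfin.card + pfin.card + L.card ≤ k := by
      have := Finset.card_le_card (Finset.union_subset hDk hLCk)
      rw [hDLcard, Finset.card_range] at this
      exact this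
    obtain ⟨S, P, R, hA, hB, hC⟩ : ∃ S P R : ℕ, n ≤ 2*S+P ∧ n = S+2*P+R ∧ 2 ≤ R ∧ S+P+R ≤ k :=
      ⟨sfin.card, pfin.card, L.card, hcov2, hpart, hr, hfinal⟩
    split_ifs with h3 <;> omega

end TDC

namespace TDC2
open TDC

def colF (n v : ℕ) : ℕ :=
  if v = 0 then (if n % 3 = 0 then 2 * (n / 3) - 1 else 2 * (n / 3))
  else if v = n - 1 ∧ n % 3 = 2 then 2 * (n / 3) + 1
  else if v % 3 = 1 then 2 * (v / 3)
  else if v % 3 = 2 then 2 * (v / 3) + 1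
  else 2 * (v / 3) - 1

def KK (n : ℕ) : ℕ :=
  2 * (n / 3) + (if n % 3 = 0 then 0 else if n % 3 = 1 then 1 else 2)

lemma colF_lt {n : ℕ} (hn : 6 ≤ n) {v : ℕ} (hv : v < n) : colF n v < KK n := by
  simp only [colF, KK]; split_ifs <;> (try contradiction) <;> omega

lemma colF_consec {n : ℕ} (hn : 6 ≤ n) {a b : ℕ} (ha : a < n) (hb : b < n)
    (hne : a ≠ b) (h : colF n a = colF n b) :
    (b = a + 1 ∨ a = b + 1 ∨ (a = 0 ∧ b = n - 1) ∨ (b = 0 ∧ a = n - 1)) := by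
  simp only [colF] at h; split_ifs at h <;> (try contradiction) <;> omega

lemma colF_sing {n : ℕ} (hn : 6 ≤ n) {x : ℕ} (hx : x < n)
    (hxs : x % 3 = 1 ∨ (x = 0 ∧ n % 3 ≠ 0)) {v : ℕ} (hv : v < n)
    (h : colF n v = colF n x) : v = x := by
  simp only [colF] at h; split_ifs at h <;> (try contradiction) <;> omega

lemma colF_pair2 {n : ℕ} (hn : 6 ≤ n) {x : ℕ} (hx : x < n - 1) (hx3 : x % 3 = 2)
    {v : ℕ} (hv : v < n) (h : colF n v = colF n x) : v = x ∨ v = x + 1 := by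
  simp only [colF] at h; split_ifs at h <;> (try contradiction) <;> omega

lemma colF_pair2' {n : ℕ} (hn : 6 ≤ n) {x : ℕ} (hx : x < n - 1) (hx3 : x % 3 = 2) :
    colF n (x + 1) = colF n x := by
  simp only [colF]; split_ifs <;> (try contradiction) <;> omega

lemma colF_pair0 {n : ℕ} (hn : 6 ≤ n) (h3 : n % 3 = 0) {v : ℕ} (hv : v < n)
    (h : colF n v = colF n (n - 1)) : v = n - 1 ∨ v = 0 := by
  simp only [colF] at h; split_ifs at h <;> (try contradiction) <;> omega

lemma colF_pair0' {n : ℕ} (hn : 6 ≤ n) (h3 : n % 3 = 0) :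
    colF n 0 = colF n (n - 1) := by
  simp only [colF]; split_ifs <;> (try contradiction) <;> omega

end TDC2

namespace TDC2
open TDC

theorem upper_general (n : ℕ) (hn : 6 ≤ n) :
    ∃ f : ZMod n ⊕ (cycleG n).edgeSet → ℕ,
      IsTDColoring (centralGraph (cycleG n)) f ∧ ∀ v, f v < KK n + 1 := by
  haveI : NeZero n := ⟨by omega⟩
  have hn2 : 2 ≤ n := by omega
  have hmod : ∀ a b : ℕ, a < n → b < n → ((a + 1) % n = b ↔ (a + 1 = b ∨ (a = n - 1 ∧ b = 0))) := by
    intro a b ha hb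
    rcases Nat.lt_or_ge (a + 1) n with h | h
    · rw [Nat.mod_eq_of_lt h]; omega
    · have he : a = n - 1 := by omega
      rw [he, Nat.sub_add_cancel (by omega), Nat.mod_self]; omega
  have adj_val : ∀ a b : ZMod n, (cycleG n).Adj a b ↔
      (b.val + 1 = a.val ∨ (b.val = n - 1 ∧ a.val = 0) ∨
       a.val + 1 = b.val ∨ (a.val = n - 1 ∧ b.val = 0)) := by
    intro a b
    have e1 := hmod b.val a.val (ZMod.val_lt b) (ZMod.val_lt a)
    have e2 := hmod a.val b.val (ZMod.val_lt a) (ZMod.val_lt b)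
    rw [cycleG_adj_iff hn2, eq_add_one_iff hn2, eq_add_one_iff hn2]
    constructor
    · rintro (h | h)
      · rcases e1.mp h.symm with h' | h'
        · exact Or.inl h'
        · exact Or.inr (Or.inl h')
      · rcases e2.mp h.symm with h' | h'
        · exact Or.inr (Or.inr (Or.inl h'))
        · exact Or.inr (Or.inr (Or.inr h'))
    · rintro (h | h | h | h)
      · exact Or.inl (e1.mpr (Or.inl h)).symm
      · exact Or.inl (e1.mpr (Or.inr h)).symm
      · exact Or.inr (e2.mpr (Or.inl h)).symm
      · exact Or.inr (e2.mpr (Or.inr h)).symm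
  set f : ZMod n ⊕ (cycleG n).edgeSet → ℕ :=
    Sum.elim (fun j => colF n j.val) (fun _ => KK n) with hfdef
  have hfinl : ∀ j : ZMod n, f (Sum.inl j) = colF n j.val := fun _ => rfl
  have hfinr : ∀ e, f (Sum.inr e) = KK n := fun _ => rfl
  have class_mem : ∀ x : ℕ, x < n → f (Sum.inl ((x : ℕ) : ZMod n)) = colF n x := by
    intro x hx; rw [hfinl, ZMod.val_cast_of_lt hx]
  have class_sing : ∀ x : ℕ, x < n → (x % 3 = 1 ∨ (x = 0 ∧ n % 3 ≠ 0)) →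
      ∀ w, f w = colF n x → w = Sum.inl ((x : ℕ) : ZMod n) := by
    intro x hx hxs w hw
    match w with
    | Sum.inl u =>
      rw [hfinl] at hw
      have := colF_sing hn hx hxs (ZMod.val_lt u) hw
      congr 1
      rw [eq_iff_val_eq, ZMod.val_cast_of_lt hx]; exact this
    | Sum.inr e' =>
      rw [hfinr] at hw
      exact absurd hw.symm (Nat.ne_of_lt (colF_lt hn hx))
  have class_pair : ∀ x : ℕ, x < n - 1 → x % 3 = 2 →
      ∀ w, f w = colF n x → w = Sum.inl ((x : ℕ) : ZMod n) ∨ w = Sum.inl (((x+1 : ℕ)) : ZMod n) := by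
    intro x hx hx3 w hw
    match w with
    | Sum.inl u =>
      rw [hfinl] at hw
      rcases colF_pair2 hn hx hx3 (ZMod.val_lt u) hw with h | h
      · left; congr 1; rw [eq_iff_val_eq, ZMod.val_cast_of_lt (by omega)]; exact h
      · right; congr 1; rw [eq_iff_val_eq, ZMod.val_cast_of_lt (by omega)]; exact h
    | Sum.inr e' =>
      rw [hfinr] at hw
      exact absurd hw.symm (Nat.ne_of_lt (colF_lt hn (by omega)))
  have class_pair0 : n % 3 = 0 →
      ∀ w, f w = colF n (n - 1) → w = Sum.inl (((n - 1 : ℕ)) : ZMod n) ∨ w = Sum.inl ((0 : ZMod n)) := by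
    intro h3 w hw
    match w with
    | Sum.inl u =>
      rw [hfinl] at hw
      rcases colF_pair0 hn h3 (ZMod.val_lt u) hw with h | h
      · left; congr 1; rw [eq_iff_val_eq, ZMod.val_cast_of_lt (by omega)]; exact h
      · right; congr 1; rw [eq_iff_val_eq, ZMod.val_zero]; exact h
    | Sum.inr e' =>
      rw [hfinr] at hw
      exact absurd hw.symm (Nat.ne_of_lt (colF_lt hn (by omega)))
  refine ⟨f, ⟨?_, ?_⟩, ?_⟩
  · -- proper coloring
    rintro (u | e) (v | e') hadj
    · obtain ⟨hne, hnadj⟩ := (central_inl_inl _ _ _).mp hadj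
      intro heq
      rw [hfinl, hfinl] at heq
      have hvne : u.val ≠ v.val := fun h => hne ((eq_iff_val_eq u v).mpr h)
      have hc := colF_consec hn (ZMod.val_lt u) (ZMod.val_lt v) hvne heq
      exact hnadj ((adj_val u v).mpr (by omega))
    · rw [hfinl, hfinr]
      exact Nat.ne_of_lt (colF_lt hn (ZMod.val_lt u))
    · rw [hfinl, hfinr]
      exact (Nat.ne_of_lt (colF_lt hn (ZMod.val_lt v))).symm
    · exact absurd hadj (central_inr_inr _ _ _)
  · -- total domination
    rintro (j | e)
    · -- original vertex
      have hsing : ∀ x : ℕ, x < n → (x % 3 = 1 ∨ (x = 0 ∧ n % 3 ≠ 0)) →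
          (¬ (cycleG n).Adj j ((x : ℕ) : ZMod n)) → j ≠ ((x : ℕ) : ZMod n) →
          ∃ c, (∃ w, f w = c) ∧ ∀ w, f w = c → (centralGraph (cycleG n)).Adj (Sum.inl j) w := by
        intro x hx hxs hnadj hne
        refine ⟨colF n x, ⟨Sum.inl ((x : ℕ) : ZMod n), class_mem x hx⟩, ?_⟩
        intro w hw
        rw [class_sing x hx hxs w hw]
        exact (central_inl_inl _ _ _).mpr ⟨hne, hnadj⟩
      have hjval := ZMod.val_lt j
      by_cases hj3 : 3 ≤ j.val
      · refine hsing 1 (by omega) (Or.inl (by norm_num)) ?_ ?_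
        · rw [adj_val, ZMod.val_cast_of_lt (show (1:ℕ) < n by omega)]
          omega
        · intro h
          have := congrArg ZMod.val h
          rw [ZMod.val_cast_of_lt (show (1:ℕ) < n by omega)] at this
          omega
      · refine hsing 4 (by omega) (Or.inl (by norm_num)) ?_ ?_
        · rw [adj_val, ZMod.val_cast_of_lt (show (4:ℕ) < n by omega)]
          omega
        · intro h
          have := congrArg ZMod.val h
          rw [ZMod.val_cast_of_lt (show (4:ℕ) < n by omega)] at this
          omega
    · -- subdivision vertex
      obtain ⟨i, hi⟩ := edge_cases hn2 e
      have hadj_e : ∀ u : ZMod n, u = i ∨ u = i + 1 →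
          (centralGraph (cycleG n)).Adj (Sum.inr e) (Sum.inl u) := by
        intro u hu
        rw [central_inr_inl, hi, mem_edge_iff]
        exact hu
      have hiv := ZMod.val_lt i
      have hiv1 : (i + 1).val = (i.val + 1) % n := val_add_one hn2 i
      have hicast : ((i.val : ℕ) : ZMod n) = i := ZMod.natCast_zmod_val i
      rcases Nat.lt_or_ge i.val (n - 1) with hvn | hvn'
      · -- i.val < n - 1
        have hi1 : (i + 1).val = i.val + 1 := by
          rw [hiv1, Nat.mod_eq_of_lt (by omega)]
        have hcast1 : (((i.val + 1 : ℕ)) : ZMod n) = i + 1 := by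
          rw [eq_iff_val_eq, ZMod.val_cast_of_lt (by omega), hi1]
        have h3cases : i.val % 3 = 0 ∨ i.val % 3 = 1 ∨ i.val % 3 = 2 := by omega
        rcases h3cases with h3 | h3 | h3
        · refine ⟨colF n (i.val + 1), ⟨Sum.inl (((i.val + 1 : ℕ)) : ZMod n),
            class_mem _ (by omega)⟩, ?_⟩
          intro w hw
          rw [class_sing (i.val + 1) (by omega) (Or.inl (by omega)) w hw]
          exact hadj_e _ (Or.inr hcast1)
        · refine ⟨colF n i.val, ⟨Sum.inl ((i.val : ℕ) : ZMod n), class_mem _ (by omega)⟩, ?_⟩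
          intro w hw
          rw [class_sing i.val (by omega) (Or.inl h3) w hw]
          exact hadj_e _ (Or.inl hicast)
        · refine ⟨colF n i.val, ⟨Sum.inl ((i.val : ℕ) : ZMod n), class_mem _ (by omega)⟩, ?_⟩
          intro w hw
          rcases class_pair i.val hvn h3 w hw with h | h
          · rw [h]; exact hadj_e _ (Or.inl hicast)
          · rw [h]; exact hadj_e _ (Or.inr hcast1)
      · -- i.val = n - 1
        have hieq : i.val = n - 1 := by omega
        have hi0 : i + 1 = 0 := by
          rw [eq_iff_val_eq, hiv1, hieq, Nat.sub_add_cancel (by omega), Nat.mod_self,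
            ZMod.val_zero]
        have hcastn1 : (((n - 1 : ℕ)) : ZMod n) = i := by
          rw [eq_iff_val_eq, ZMod.val_cast_of_lt (by omega), hieq]
        have h3cases : n % 3 = 0 ∨ n % 3 = 1 ∨ n % 3 = 2 := by omega
        rcases h3cases with h3 | h3 | h3
        · refine ⟨colF n (n - 1), ⟨Sum.inl (((n - 1 : ℕ)) : ZMod n), class_mem _ (by omega)⟩, ?_⟩
          intro w hw
          rcases class_pair0 h3 w hw with h | h
          · rw [h]; exact hadj_e _ (Or.inl hcastn1)
          · rw [h]; exact hadj_e _ (Or.inr hi0.symm)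
        · refine ⟨colF n 0, ⟨Sum.inl (((0 : ℕ)) : ZMod n), class_mem _ (by omega)⟩, ?_⟩
          intro w hw
          rw [class_sing 0 (by omega) (Or.inr ⟨rfl, by omega⟩) w hw]
          refine hadj_e _ (Or.inr ?_)
          rw [Nat.cast_zero, hi0]
        · refine ⟨colF n (n - 1), ⟨Sum.inl (((n - 1 : ℕ)) : ZMod n), class_mem _ (by omega)⟩, ?_⟩
          intro w hw
          rw [class_sing (n - 1) (by omega) (Or.inl (by omega)) w hw]
          exact hadj_e _ (Or.inl hcastn1)
  · -- color bound
    rintro (u | e)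
    · exact (colF_lt hn (ZMod.val_lt u)).trans (Nat.lt_succ_self _)
    · exact Nat.lt_succ_self _

end TDC2

namespace TDC3
open TDC

instance (n : ℕ) : DecidableRel (cycleG n).Adj := fun a b =>
  decidable_of_iff (a ≠ b ∧ (a - b = 1 ∨ b - a = 1)) (cycleG_adj a b).symm

instance {V : Type*} [DecidableEq V] (G : SimpleGraph V) [DecidableRel G.Adj] :
    DecidableRel (centralGraph G).Adj := fun x y =>
  match x, y with
  | Sum.inl _, Sum.inl _ => instDecidableAnd
  | Sum.inl u, Sum.inr e => Sym2.Mem.decidable u e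
  | Sum.inr e, Sum.inl u => Sym2.Mem.decidable u e
  | Sum.inr _, Sum.inr _ => instDecidableFalse

set_option maxRecDepth 40000 in
lemma three_lower_dec : ∀ g : (ZMod 3 ⊕ (cycleG 3).edgeSet) → Fin 3,
    ¬ ((∀ u v, (centralGraph (cycleG 3)).Adj u v → g u ≠ g v) ∧
      ∀ v, ∃ c : Fin 3, (∃ w, g w = c) ∧ ∀ w, g w = c → (centralGraph (cycleG 3)).Adj v w) := by
  decide

lemma three_lower (k : ℕ) (f : ZMod 3 ⊕ (cycleG 3).edgeSet → ℕ)
    (hf : IsTDColoring (centralGraph (cycleG 3)) f) (hk : ∀ v, f v < k) : 4 ≤ k := by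
  by_contra h
  push_neg at h
  have hk3 : ∀ v, f v < 3 := fun v => lt_of_lt_of_le (hk v) (by omega)
  apply three_lower_dec (fun v => (⟨f v, hk3 v⟩ : Fin 3))
  constructor
  · intro u v hadj he
    exact hf.1 u v hadj (congrArg Fin.val he)
  · intro v
    obtain ⟨c, ⟨w, hw⟩, hall⟩ := hf.2 v
    refine ⟨⟨c, hw ▸ hk3 w⟩, ⟨w, Fin.ext hw⟩, ?_⟩
    intro w' hw'
    exact hall w' (congrArg Fin.val hw')

def f3 : ZMod 3 ⊕ (cycleG 3).edgeSet → ℕ :=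
  Sum.elim (fun j => [1,0,1].getD j.val 0)
    (fun e => if (2 : ZMod 3) ∈ e.val then (if (1 : ZMod 3) ∈ e.val then 3 else 2) else 2)
def cw3 : ZMod 3 ⊕ (cycleG 3).edgeSet → ℕ :=
  Sum.elim (fun j => [2,3,3].getD j.val 0)
    (fun e => if (1 : ZMod 3) ∈ e.val then 0 else 1)

set_option maxRecDepth 40000 in
lemma three_upper_dec : (∀ u v, (centralGraph (cycleG 3)).Adj u v → f3 u ≠ f3 v) ∧
    (∀ v, (∃ w, f3 w = cw3 v) ∧ ∀ w, f3 w = cw3 v → (centralGraph (cycleG 3)).Adj v w) ∧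
    (∀ v, f3 v < 4) := by decide

def f4 : ZMod 4 ⊕ (cycleG 4).edgeSet → ℕ :=
  Sum.elim (fun j => [2,0,3,1].getD j.val 0)
    (fun e => if (2 : ZMod 4) ∈ e.val then 2 else 3)
def cw4 : ZMod 4 ⊕ (cycleG 4).edgeSet → ℕ :=
  Sum.elim (fun j => [3,1,2,0].getD j.val 0)
    (fun e => if (1 : ZMod 4) ∈ e.val then 0 else 1)

set_option maxRecDepth 40000 in
lemma four_upper_dec : (∀ u v, (centralGraph (cycleG 4)).Adj u v → f4 u ≠ f4 v) ∧
    (∀ v, (∃ w, f4 w = cw4 v) ∧ ∀ w, f4 w = cw4 v → (centralGraph (cycleG 4)).Adj v w) ∧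
    (∀ v, f4 v < 4) := by decide

def f5 : ZMod 5 ⊕ (cycleG 5).edgeSet → ℕ :=
  Sum.elim (fun j => [2,0,1,1,3].getD j.val 0) (fun _ => 4)
def cw5 : ZMod 5 ⊕ (cycleG 5).edgeSet → ℕ :=
  Sum.elim (fun j => [1,3,2,2,0].getD j.val 0)
    (fun e => if (1 : ZMod 5) ∈ e.val then 0 else
      if (3 : ZMod 5) ∈ e.val ∧ (2 : ZMod 5) ∈ e.val then 1 else
      if (4 : ZMod 5) ∈ e.val ∧ (3 : ZMod 5) ∈ e.val then 3 else 2)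

set_option maxRecDepth 40000 in
lemma five_upper_dec : (∀ u v, (centralGraph (cycleG 5)).Adj u v → f5 u ≠ f5 v) ∧
    (∀ v, (∃ w, f5 w = cw5 v) ∧ ∀ w, f5 w = cw5 v → (centralGraph (cycleG 5)).Adj v w) ∧
    (∀ v, f5 v < 5) := by decide

lemma three_upper_mem : (4 : ℕ) ∈ {k | ∃ f : ZMod 3 ⊕ (cycleG 3).edgeSet → ℕ,
    IsTDColoring (centralGraph (cycleG 3)) f ∧ ∀ v, f v < k} :=
  ⟨f3, ⟨three_upper_dec.1, fun v => ⟨cw3 v, (three_upper_dec.2.1 v).1, (three_upper_dec.2.1 v).2⟩⟩,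
    three_upper_dec.2.2⟩

lemma four_upper_mem : (4 : ℕ) ∈ {k | ∃ f : ZMod 4 ⊕ (cycleG 4).edgeSet → ℕ,
    IsTDColoring (centralGraph (cycleG 4)) f ∧ ∀ v, f v < k} :=
  ⟨f4, ⟨four_upper_dec.1, fun v => ⟨cw4 v, (four_upper_dec.2.1 v).1, (four_upper_dec.2.1 v).2⟩⟩,
    four_upper_dec.2.2⟩

lemma five_upper_mem : (5 : ℕ) ∈ {k | ∃ f : ZMod 5 ⊕ (cycleG 5).edgeSet → ℕ,
    IsTDColoring (centralGraph (cycleG 5)) f ∧ ∀ v, f v < k} :=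
  ⟨f5, ⟨five_upper_dec.1, fun v => ⟨cw5 v, (five_upper_dec.2.1 v).1, (five_upper_dec.2.1 v).2⟩⟩,
    five_upper_dec.2.2⟩

end TDC3

theorem tdcn_central_cycle (n : ℕ) (hn : 3 ≤ n) :
    (n % 3 = 0 ∧ n ≠ 3 → tdcn (centralGraph (cycleG n)) = 2 * n / 3 + 1) ∧
    (¬ (n % 3 = 0 ∧ n ≠ 3) → tdcn (centralGraph (cycleG n)) = 2 * n / 3 + 2) := by
  constructor
  · rintro ⟨h0, h3⟩
    have hn6 : 6 ≤ n := by omega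
    have hub := TDC2.upper_general n hn6
    have hT : TDC2.KK n + 1 = 2 * n / 3 + 1 := by
      simp only [TDC2.KK]; split_ifs <;> omega
    rw [hT] at hub
    apply le_antisymm
    · exact Nat.sInf_le hub
    · refine le_csInf ⟨_, hub⟩ ?_
      rintro k ⟨f, hf, hk⟩
      have := TDC.lower_bound n k (by omega) f hf hk
      rwa [if_pos h0] at this
  · intro hnot
    have hcase : n = 3 ∨ n = 4 ∨ n = 5 ∨ (6 ≤ n ∧ n % 3 ≠ 0) := by
      by_cases h : n = 3
      · exact Or.inl h
      · have : n % 3 ≠ 0 := fun hc => hnot ⟨hc, h⟩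
        omega
    rcases hcase with h | h | h | ⟨h6, hmod⟩
    · subst h
      rw [show (2 * 3 / 3 + 2 : ℕ) = 4 by norm_num]
      apply le_antisymm
      · exact Nat.sInf_le TDC3.three_upper_mem
      · refine le_csInf ⟨_, TDC3.three_upper_mem⟩ ?_
        rintro k ⟨f, hf, hk⟩
        exact TDC3.three_lower k f hf hk
    · subst h
      rw [show (2 * 4 / 3 + 2 : ℕ) = 4 by norm_num]
      apply le_antisymm
      · exact Nat.sInf_le TDC3.four_upper_mem
      · refine le_csInf ⟨_, TDC3.four_upper_mem⟩ ?_
        rintro k ⟨f, hf, hk⟩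
        have := TDC.lower_bound 4 k (by omega) f hf hk
        rw [if_neg (by norm_num)] at this
        omega
    · subst h
      rw [show (2 * 5 / 3 + 2 : ℕ) = 5 by norm_num]
      apply le_antisymm
      · exact Nat.sInf_le TDC3.five_upper_mem
      · refine le_csInf ⟨_, TDC3.five_upper_mem⟩ ?_
        rintro k ⟨f, hf, hk⟩
        have := TDC.lower_bound 5 k (by omega) f hf hk
        rw [if_neg (by norm_num)] at this
        omega
    · have hub := TDC2.upper_general n h6
      have hT : TDC2.KK n + 1 = 2 * n / 3 + 2 := by
        simp only [TDC2.KK]; split_ifs <;> omega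
      rw [hT] at hub
      apply le_antisymm
      · exact Nat.sInf_le hub
      · refine le_csInf ⟨_, hub⟩ ?_
        rintro k ⟨f, hf, hk⟩
        have := TDC.lower_bound n k (by omega) f hf hk
        rwa [if_neg hmod] at this
end

section
/- For the wheel W_n of order n+1 ≥ 4 (a cycle C_n plus a hub adjacent to all cycle vertices), χ_d^t(C(W_n)) = ⌊2n/3⌋ + 3 if n ≡ 0 (mod 3) and n ≠ 3, and χ_d^t(C(W_n)) = ⌊2n/3⌋ + 4 otherwise. -/
open SimpleGraph

namespace TDCW

abbrev VW (n : ℕ) := ZMod n ⊕ Fin 1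
abbrev Wg (n : ℕ) : SimpleGraph (VW n) := joinGraph (cycleG n) (⊥ : SimpleGraph (Fin 1))
abbrev VH (n : ℕ) := VW n ⊕ (Wg n).edgeSet
abbrev Hg (n : ℕ) : SimpleGraph (VH n) := centralGraph (Wg n)

variable {n : ℕ}

def rim (i : ZMod n) : VH n := Sum.inl (Sum.inl i)
def hubv (n : ℕ) : VH n := Sum.inl (Sum.inr 0)
def subv (e : (Wg n).edgeSet) : VH n := Sum.inr e

lemma wadj_rim_rim {i j : ZMod n} :
    (Wg n).Adj (Sum.inl i) (Sum.inl j) ↔ i ≠ j ∧ (i - j = 1 ∨ j - i = 1) := by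
  show (cycleG n).Adj i j ↔ _
  rw [cycleG, SimpleGraph.fromRel_adj]

lemma wadj_rim_hub {i : ZMod n} {u : Fin 1} :
    (Wg n).Adj (Sum.inl i) (Sum.inr u) := trivial

lemma wadj_hub_rim {i : ZMod n} {u : Fin 1} :
    (Wg n).Adj (Sum.inr u) (Sum.inl i) := trivial

-- H adjacency unfolding
lemma hadj_rim_rim {i j : ZMod n} :
    (Hg n).Adj (rim i) (rim j) ↔ i ≠ j ∧ ¬(i - j = 1 ∨ j - i = 1) := by
  show (Sum.inl i ≠ Sum.inl j ∧ ¬ (Wg n).Adj (Sum.inl i) (Sum.inl j)) ↔ _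
  rw [wadj_rim_rim]
  constructor
  · rintro ⟨hne, h2⟩
    have hij : i ≠ j := fun h => hne (by rw [h])
    exact ⟨hij, fun hc => h2 ⟨hij, hc⟩⟩
  · rintro ⟨hij, h2⟩
    exact ⟨fun h => hij (Sum.inl.inj h), fun hc => h2 hc.2⟩

lemma not_hadj_rim_hub {i : ZMod n} : ¬ (Hg n).Adj (rim i) (hubv n) := by
  rintro ⟨-, h2⟩
  exact h2 trivial

lemma not_hadj_hub_rim {i : ZMod n} : ¬ (Hg n).Adj (hubv n) (rim i) := by
  rintro ⟨-, h2⟩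
  exact h2 trivial

lemma not_hadj_hub_hub : ¬ (Hg n).Adj (hubv n) (hubv n) := (Hg n).loopless.irrefl _

lemma hadj_rim_subv {i : ZMod n} {e : (Wg n).edgeSet} :
    (Hg n).Adj (rim i) (subv e) ↔ (Sum.inl i : VW n) ∈ (e : Sym2 (VW n)) := Iff.rfl

lemma hadj_subv_rim {i : ZMod n} {e : (Wg n).edgeSet} :
    (Hg n).Adj (subv e) (rim i) ↔ (Sum.inl i : VW n) ∈ (e : Sym2 (VW n)) := Iff.rfl

lemma hadj_hub_subv {e : (Wg n).edgeSet} :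
    (Hg n).Adj (hubv n) (subv e) ↔ (Sum.inr 0 : VW n) ∈ (e : Sym2 (VW n)) := Iff.rfl

lemma hadj_subv_hub {e : (Wg n).edgeSet} :
    (Hg n).Adj (subv e) (hubv n) ↔ (Sum.inr 0 : VW n) ∈ (e : Sym2 (VW n)) := Iff.rfl

lemma not_hadj_subv_subv {e e' : (Wg n).edgeSet} : ¬ (Hg n).Adj (subv e) (subv e') :=
  fun h => h

-- edges
def spokeE (i : ZMod n) : (Wg n).edgeSet :=
  ⟨s(Sum.inl i, Sum.inr 0), trivial⟩

lemma one_ne_zero' (hn : 3 ≤ n) : (1 : ZMod n) ≠ 0 := by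
  haveI : Fact (1 < n) := ⟨by omega⟩
  exact one_ne_zero

lemma natCast_nz (hn : 3 ≤ n) {a : ℕ} (h0 : 0 < a) (h1 : a < n) : (a : ZMod n) ≠ 0 := by
  rw [Ne, ZMod.natCast_eq_zero_iff]
  intro hdvd
  exact absurd (Nat.le_of_dvd h0 hdvd) (by omega)

lemma two_ne_zero' (hn : 3 ≤ n) : (2 : ZMod n) ≠ 0 := by
  have := natCast_nz hn (a := 2) (by omega) (by omega)
  simpa using this

def rimE (hn : 3 ≤ n) (i : ZMod n) : (Wg n).edgeSet :=
  ⟨s(Sum.inl i, Sum.inl (i + 1)), by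
    rw [SimpleGraph.mem_edgeSet, wadj_rim_rim]
    refine ⟨fun h => one_ne_zero' hn ?_, Or.inr (add_sub_cancel_left i 1)⟩
    exact (add_eq_left.mp h.symm)⟩

lemma mem_spokeE {x : VW n} {i : ZMod n} :
    x ∈ ((spokeE i : (Wg n).edgeSet) : Sym2 (VW n)) ↔ x = Sum.inl i ∨ x = Sum.inr 0 := by
  simp [spokeE]

lemma mem_rimE {hn : 3 ≤ n} {x : VW n} {i : ZMod n} :
    x ∈ ((rimE hn i : (Wg n).edgeSet) : Sym2 (VW n)) ↔ x = Sum.inl i ∨ x = Sum.inl (i+1) := by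
  simp [rimE]

lemma spokeE_inj {i j : ZMod n} (h : (spokeE i : (Wg n).edgeSet) = spokeE j) : i = j := by
  have := congrArg (fun e => ((e : (Wg n).edgeSet) : Sym2 (VW n))) h
  simp only [spokeE] at this
  rw [Sym2.eq_iff] at this
  rcases this with ⟨h1, -⟩ | ⟨h1, h2⟩
  · exact Sum.inl.inj h1
  · exact absurd h1 (by simp)

lemma rimE_inj (hn : 3 ≤ n) {i j : ZMod n} (h : rimE hn i = rimE hn j) : i = j := by
  have := congrArg (fun e => ((e : (Wg n).edgeSet) : Sym2 (VW n))) h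
  simp only [rimE] at this
  rw [Sym2.eq_iff] at this
  rcases this with ⟨h1, -⟩ | ⟨h1, h2⟩
  · exact Sum.inl.inj h1
  · -- i = j + 1 and i + 1 = j : then 2 = 0
    have e1 : i = j + 1 := Sum.inl.inj h1
    have e2 : i + 1 = j := Sum.inl.inj h2
    exfalso
    apply two_ne_zero' hn
    linear_combination e2 - e1

lemma spokeE_ne_rimE (hn : 3 ≤ n) (i j : ZMod n) : (spokeE i : (Wg n).edgeSet) ≠ rimE hn j := by
  intro h
  have : (Sum.inr 0 : VW n) ∈ ((rimE hn j : (Wg n).edgeSet) : Sym2 (VW n)) := by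
    rw [← h, mem_spokeE]; right; rfl
  rw [mem_rimE] at this
  rcases this with h1 | h1 <;> exact absurd h1 (by simp)

lemma edge_cases (hn : 3 ≤ n) (e : (Wg n).edgeSet) :
    (∃ i, e = spokeE i) ∨ (∃ i, e = rimE hn i) := by
  obtain ⟨q, hq⟩ := e
  induction q using Sym2.ind with
  | _ x y =>
    rw [SimpleGraph.mem_edgeSet] at hq
    match x, y with
    | Sum.inl i, Sum.inl j =>
      right
      rw [wadj_rim_rim] at hq
      rcases hq.2 with h1 | h1
      · -- i - j = 1, i.e. i = j + 1
        refine ⟨j, Subtype.ext ?_⟩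
        show s(Sum.inl i, Sum.inl j) = s(Sum.inl j, Sum.inl (j+1))
        rw [Sym2.eq_swap]
        have : i = j + 1 := by linear_combination h1
        rw [this]
      · refine ⟨i, Subtype.ext ?_⟩
        show s(Sum.inl i, Sum.inl j) = s(Sum.inl i, Sum.inl (i+1))
        have : j = i + 1 := by linear_combination h1
        rw [this]
    | Sum.inl i, Sum.inr u =>
      left
      refine ⟨i, Subtype.ext ?_⟩
      show s(Sum.inl i, Sum.inr u) = s(Sum.inl i, Sum.inr 0)
      rw [Subsingleton.elim u 0]
    | Sum.inr u, Sum.inl i =>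
      left
      refine ⟨i, Subtype.ext ?_⟩
      show s(Sum.inr u, Sum.inl i) = s(Sum.inl i, Sum.inr 0)
      rw [Sym2.eq_swap, Subsingleton.elim u 0]
    | Sum.inr u, Sum.inr v =>
      exact absurd hq (by exact fun h => h)

-- neighborhood lemmas
lemma nbhd_hub (hn : 3 ≤ n) {w : VH n} (h : (Hg n).Adj (hubv n) w) :
    ∃ i, w = subv (spokeE i) := by
  match w with
  | Sum.inl (Sum.inl i) => exact absurd h not_hadj_hub_rim
  | Sum.inl (Sum.inr u) =>
    exfalso
    have hu : u = 0 := Subsingleton.elim u 0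
    subst hu
    exact not_hadj_hub_hub h
  | Sum.inr e =>
    rcases edge_cases hn e with ⟨i, rfl⟩ | ⟨i, rfl⟩
    · exact ⟨i, rfl⟩
    · exfalso
      have h1 : (Sum.inr 0 : VW n) ∈ ((rimE hn i : (Wg n).edgeSet) : Sym2 (VW n)) := h
      rw [mem_rimE] at h1
      rcases h1 with h1 | h1 <;> exact absurd h1 (by simp)

lemma nbhd_spoke (hn : 3 ≤ n) {i : ZMod n} {w : VH n} (h : (Hg n).Adj (subv (spokeE i)) w) :
    w = hubv n ∨ w = rim i := by
  match w with
  | Sum.inl x =>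
    have hx : x ∈ ((spokeE i : (Wg n).edgeSet) : Sym2 (VW n)) := h
    rw [mem_spokeE] at hx
    rcases hx with rfl | rfl
    · right; rfl
    · left; rfl
  | Sum.inr e => exact absurd h not_hadj_subv_subv

lemma nbhd_rimE (hn : 3 ≤ n) {i : ZMod n} {w : VH n} (h : (Hg n).Adj (subv (rimE hn i)) w) :
    w = rim i ∨ w = rim (i + 1) := by
  match w with
  | Sum.inl x =>
    have hx : x ∈ ((rimE hn i : (Wg n).edgeSet) : Sym2 (VW n)) := h
    rw [mem_rimE] at hx
    rcases hx with rfl | rfl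
    · left; rfl
    · right; rfl
  | Sum.inr e => exact absurd h not_hadj_subv_subv



-- helper injectivity lemmas
lemma rim_inj {a b : ZMod n} (h : rim a = rim b) : a = b := by
  simpa [rim] using h

lemma rim_ne_hubv {a : ZMod n} : rim a ≠ hubv n := by simp [rim, hubv]

lemma rim_ne_subv {a : ZMod n} {e : (Wg n).edgeSet} : rim a ≠ subv e := by simp [rim, subv]

lemma hubv_ne_subv {e : (Wg n).edgeSet} : hubv n ≠ subv e := by simp [hubv, subv]

lemma subv_inj {e e' : (Wg n).edgeSet} (h : subv e = subv e') : e = e' := by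
  simpa [subv] using h

lemma three_ne_zero' (hn : 4 ≤ n) : (3 : ZMod n) ≠ 0 := by
  have := natCast_nz (by omega : 3 ≤ n) (a := 3) (by omega) (by omega)
  simpa using this

lemma lower_ge (hn : 4 ≤ n) (f : VH n → ℕ) (hf : IsTDColoring (Hg n) f) (k : ℕ)
    (hk : ∀ v, f v < k) : n - n / 3 + 3 ≤ k := by
  classical
  haveI : NeZero n := ⟨by omega⟩
  have hn3 : 3 ≤ n := by omega
  obtain ⟨hprop, hdom⟩ := hf
  set g : ZMod n → ℕ := fun i => f (rim i) with hg
  have hz1 : (1 : ZMod n) ≠ 0 := one_ne_zero' hn3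
  have hz2 : (2 : ZMod n) ≠ 0 := two_ne_zero' hn3
  have hz3 : (3 : ZMod n) ≠ 0 := three_ne_zero' hn
  -- local injectivity of g
  have loc : ∀ i j : ZMod n, g i = g j → i = j ∨ i = j + 1 ∨ j = i + 1 := by
    intro i j hgij
    by_contra hcon
    push_neg at hcon
    obtain ⟨h1, h2, h3⟩ := hcon
    have hadj : (Hg n).Adj (rim i) (rim j) := by
      rw [hadj_rim_rim]
      refine ⟨h1, ?_⟩
      rintro (hs | hs)
      · exact h2 (by linear_combination hs)
      · exact h3 (by linear_combination hs)
    exact hprop _ _ hadj hgij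
  -- domination witnesses
  have D3 : ∀ i : ZMod n, ∃ c, (∃ w, f w = c) ∧ ∀ w, f w = c → w = rim i ∨ w = rim (i+1) := by
    intro i
    obtain ⟨c, hne, hall⟩ := hdom (subv (rimE hn3 i))
    exact ⟨c, hne, fun w hw => nbhd_rimE hn3 (hall w hw)⟩
  have D2 : ∀ i : ZMod n, ∃ c, (∃ w, f w = c) ∧ ∀ w, f w = c → w = hubv n ∨ w = rim i := by
    intro i
    obtain ⟨c, hne, hall⟩ := hdom (subv (spokeE i))
    exact ⟨c, hne, fun w hw => nbhd_spoke hn3 (hall w hw)⟩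
  obtain ⟨c1, ⟨w1, hw1⟩, hall1⟩ := hdom (hubv n)
  have hc1 : ∀ w, f w = c1 → ∃ i, w = subv (spokeE i) := fun w hw => nbhd_hub hn3 (hall1 w hw)
  have hc1_lt : c1 < k := hw1 ▸ hk w1
  have hc1_ne_g : ∀ i, c1 ≠ g i := by
    intro i he
    obtain ⟨i', hi'⟩ := hc1 (rim i) he.symm
    exact rim_ne_subv hi'
  have hc1_ne_hub : c1 ≠ f (hubv n) := by
    intro he
    obtain ⟨i', hi'⟩ := hc1 (hubv n) he.symm
    exact hubv_ne_subv hi'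
  -- the two key finsets
  set Q : Finset (ZMod n) := Finset.univ.filter (fun i => g i = g (i+1)) with hQ
  set S : Finset (ZMod n) := Finset.univ.filter (fun j => ∀ w, f w = g j → w = rim j) with hS
  have memQ : ∀ {i : ZMod n}, i ∈ Q ↔ g i = g (i+1) := by
    intro i; rw [hQ, Finset.mem_filter]; simp
  have memS : ∀ {j : ZMod n}, j ∈ S ↔ ∀ w, f w = g j → w = rim j := by
    intro j; rw [hS, Finset.mem_filter]; simp
  -- pure pair classes
  have pureQ : ∀ i ∈ Q, ∀ w, f w = g i → w = rim i ∨ w = rim (i+1) := by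
    intro i hi
    have hQi : g i = g (i+1) := memQ.mp hi
    obtain ⟨c, ⟨w0, hw0⟩, hall⟩ := D3 i
    rcases hall w0 hw0 with rfl | rfl
    · have hc : g i = c := hw0
      intro w hw
      exact hall w (hc ▸ hw)
    · have hc : g i = c := hQi.trans hw0
      intro w hw
      exact hall w (hc ▸ hw)
  -- no two consecutive in Q
  have QQ1 : ∀ i ∈ Q, i + 1 ∉ Q := by
    intro i hi hi1
    have h1 : g i = g (i+1) := memQ.mp hi
    have h2 : g (i+1) = g (i+1+1) := memQ.mp hi1
    have h3 : g i = g (i+2) := by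
      have h4 : i + 1 + 1 = i + 2 := by ring
      rw [h1, h2, h4]
    rcases loc _ _ h3 with h4 | h4 | h4
    · exact hz2 (by linear_combination -h4)
    · exact hz3 (by linear_combination -h4)
    · exact hz1 (by linear_combination h4)
  -- Q pushes into S
  have QS : ∀ i ∈ Q, (i - 1 ∈ S ∧ i + 2 ∈ S) := by
    intro i hiQ
    have hQi : g i = g (i+1) := memQ.mp hiQ
    constructor
    · obtain ⟨c, ⟨w0, hw0⟩, hall⟩ := D3 (i-1)
      have hsub : ∀ w, f w = c → w = rim (i-1) ∨ w = rim i := by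
        intro w hw
        have := hall w hw
        rwa [sub_add_cancel] at this
      have hgi : g i ≠ c := by
        intro he
        have h2 : f (rim (i+1)) = c := hQi.symm.trans he
        rcases hsub _ h2 with h3 | h3
        · exact hz2 (by linear_combination (rim_inj h3))
        · exact hz1 (by linear_combination (rim_inj h3))
      rcases hsub w0 hw0 with rfl | rfl
      · have hc : g (i-1) = c := hw0
        rw [memS]
        intro w hw
        rcases hsub w (hc ▸ hw) with h | h
        · exact h
        · exfalso
          apply hgi
          subst h
          exact hc ▸ hw
      · exact absurd hw0 hgi
    · obtain ⟨c, ⟨w0, hw0⟩, hall⟩ := D3 (i+1)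
      have hre : i + 1 + 1 = i + 2 := by ring
      have hsub : ∀ w, f w = c → w = rim (i+1) ∨ w = rim (i+2) := by
        intro w hw
        have := hall w hw
        rwa [hre] at this
      have hgi : g (i+1) ≠ c := by
        intro he
        have h2 : f (rim i) = c := hQi.trans he
        rcases hsub _ h2 with h3 | h3
        · exact hz1 (by linear_combination -(rim_inj h3))
        · exact hz2 (by linear_combination -(rim_inj h3))
      rcases hsub w0 hw0 with rfl | rfl
      · exact absurd hw0 hgi
      · have hc : g (i+2) = c := hw0
        rw [memS]
        intro w hw
        rcases hsub w (hc ▸ hw) with h | h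
        · exfalso
          apply hgi
          subst h
          exact hc ▸ hw
        · exact h
  -- disjointness facts
  have SnotQ : ∀ j ∈ S, j ∉ Q := by
    intro j hjS hjQ
    have h1 : g j = g (j+1) := memQ.mp hjQ
    have h2 := memS.mp hjS (rim (j+1)) h1.symm
    exact hz1 (by linear_combination (rim_inj h2))
  have SnotQ1 : ∀ j ∈ S, ∀ i ∈ Q, j ≠ i + 1 := by
    intro j hjS i hiQ he
    have h1 : g i = g (i+1) := memQ.mp hiQ
    have h2 : f (rim i) = g j := by
      show g i = g j
      rw [he, h1]
    have h3 := memS.mp hjS (rim i) h2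
    rw [he] at h3
    exact hz1 (by linear_combination -(rim_inj h3))
  set Q1 : Finset (ZMod n) := Q.image (· + 1) with hQ1
  have memQ1 : ∀ {j : ZMod n}, j ∈ Q1 ↔ ∃ i ∈ Q, i + 1 = j := by
    intro j; rw [hQ1, Finset.mem_image]
  have hQ1card : Q1.card = Q.card := by
    apply Finset.card_image_of_injective
    exact fun a b hab => by linear_combination hab
  have hdisQQ1 : Disjoint Q Q1 := by
    rw [Finset.disjoint_left]
    intro a haQ haQ1
    obtain ⟨b, hbQ, hba⟩ := memQ1.mp haQ1
    exact QQ1 b hbQ (hba ▸ haQ)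
  have hdisS : Disjoint (Q ∪ Q1) S := by
    rw [Finset.disjoint_right]
    intro a haS haU
    rcases Finset.mem_union.mp haU with h | h
    · exact SnotQ a haS h
    · obtain ⟨b, hbQ, hba⟩ := memQ1.mp h
      exact SnotQ1 a haS b hbQ hba.symm
  -- card bounds
  have hQScard : Q.card ≤ S.card := by
    apply Finset.card_le_card_of_injOn (fun i => i - 1)
    · intro i hi
      exact (QS i hi).1
    · intro a _ b _ hab
      have : a - 1 = b - 1 := hab
      linear_combination this
  have hUnionCard : (Q ∪ Q1 ∪ S).card = 2 * Q.card + S.card := by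
    rw [Finset.card_union_of_disjoint hdisS, Finset.card_union_of_disjoint hdisQQ1, hQ1card]
    ring
  have hCardUniv : (Finset.univ : Finset (ZMod n)).card = n := by
    rw [Finset.card_univ, ZMod.card]
  have hQbound : 3 * Q.card ≤ n := by
    have h1 : (Q ∪ Q1 ∪ S).card ≤ n := by
      have h2 := Finset.card_le_univ (Q ∪ Q1 ∪ S)
      rwa [ZMod.card] at h2
    omega
  -- rim color count
  set Crim : Finset ℕ := Finset.univ.image g with hCrim
  have hRimLB : n - Q.card ≤ Crim.card := by
    have hsub : (Finset.univ \ Q1).image g ⊆ Crim := by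
      apply Finset.image_subset_image
      exact Finset.sdiff_subset
    have hinj : Set.InjOn g ((Finset.univ \ Q1) : Finset (ZMod n)) := by
      intro a ha b hb hab
      rcases loc _ _ hab with h | h | h
      · exact h
      · exfalso
        have hbQ : b ∈ Q := memQ.mpr (by rw [← h]; exact hab.symm)
        have : a ∈ Q1 := memQ1.mpr ⟨b, hbQ, h.symm⟩
        simp only [Finset.mem_coe, Finset.mem_sdiff] at ha
        exact ha.2 this
      · exfalso
        have haQ : a ∈ Q := memQ.mpr (by rw [← h]; exact hab)
        have : b ∈ Q1 := memQ1.mpr ⟨a, haQ, h.symm⟩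
        simp only [Finset.mem_coe, Finset.mem_sdiff] at hb
        exact hb.2 this
    calc n - Q.card = (Finset.univ \ Q1).card := by
          rw [Finset.card_sdiff_of_subset (Finset.subset_univ _), hQ1card, hCardUniv]
      _ = ((Finset.univ \ Q1).image g).card := (Finset.card_image_of_injOn hinj).symm
      _ ≤ Crim.card := Finset.card_le_card hsub
  have hCrimRange : Crim ⊆ Finset.range k := by
    intro c hc
    obtain ⟨i, _, rfl⟩ := Finset.mem_image.mp hc
    exact Finset.mem_range.mpr (hk _)
  -- rim-subdivision colors
  set h' : ZMod n → ℕ := fun i => f (subv (rimE hn3 i)) with hh'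
  have hh_ne_c1 : ∀ i, h' i ≠ c1 := by
    intro i he
    obtain ⟨i', hi'⟩ := hc1 (subv (rimE hn3 i)) he
    exact spokeE_ne_rimE hn3 i' i (subv_inj hi').symm
  -- MAIN CASES
  by_cases hB : ∃ j, f (hubv n) = g j
  · -- Case B : hub shares color with a rim vertex
    obtain ⟨j0, hj0⟩ := hB
    have pure : ∀ i, i ≠ j0 → ∀ w, f w = g i → w = rim i := by
      intro i hne
      obtain ⟨c, ⟨w0, hw0⟩, hall⟩ := D2 i
      have hchub : c ≠ f (hubv n) := by
        intro he
        have h2 : f (rim j0) = c := by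
          show g j0 = c
          rw [← hj0, he]
        rcases hall _ h2 with h3 | h3
        · exact rim_ne_hubv h3
        · exact hne (rim_inj h3).symm
      have hns : ∀ w, f w = c → w = rim i := by
        intro w hw
        rcases hall w hw with rfl | h
        · exact absurd hw (Ne.symm hchub)
        · exact h
      have hci : g i = c := by
        have h0 := hns w0 hw0
        subst h0
        exact hw0
      intro w hw
      exact hns w (hci ▸ hw)
    have ginj : Function.Injective g := by
      intro a b hab
      by_cases ha : a = j0
      · by_cases hb : b = j0
        · rw [ha, hb]
        · exact (rim_inj (pure b hb (rim a) hab)).symm ▸ rfl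
      · exact (rim_inj (pure a ha (rim b) hab.symm)).symm
    have hCrimCard : Crim.card = n := by
      rw [hCrim, Finset.card_image_of_injective _ ginj, hCardUniv]
    have hhj0 : ∀ i, h' j0 ≠ g i := by
      intro i he
      by_cases hi : i = j0
      · subst hi
        have hadj : (Hg n).Adj (subv (rimE hn3 i)) (rim i) := by
          rw [hadj_subv_rim, mem_rimE]
          left; rfl
        exact hprop _ _ hadj he
      · exact rim_ne_subv (pure i hi (subv (rimE hn3 j0)) he).symm
    -- count
    have hsub : insert c1 (insert (h' j0) Crim) ⊆ Finset.range k := by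
      intro c hc
      rcases Finset.mem_insert.mp hc with rfl | hc
      · exact Finset.mem_range.mpr hc1_lt
      rcases Finset.mem_insert.mp hc with rfl | hc
      · exact Finset.mem_range.mpr (hk _)
      · exact hCrimRange hc
    have hcard : n + 2 ≤ (insert c1 (insert (h' j0) Crim)).card := by
      rw [Finset.card_insert_of_notMem, Finset.card_insert_of_notMem, hCrimCard]
      · intro hmem
        obtain ⟨i, _, hi⟩ := Finset.mem_image.mp hmem
        exact hhj0 i hi.symm
      · intro hmem
        rcases Finset.mem_insert.mp hmem with he | hmem
        · exact hh_ne_c1 j0 he.symm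
        · obtain ⟨i, _, hi⟩ := Finset.mem_image.mp hmem
          exact hc1_ne_g i hi.symm
    have := le_trans hcard (le_trans (Finset.card_le_card hsub) (by rw [Finset.card_range]))
    omega
  · push_neg at hB
    by_cases hA2 : ∃ i, h' i = f (hubv n)
    · -- hub's class contains a rim-subdivision vertex
      obtain ⟨i0, hi0⟩ := hA2
      have pure : ∀ i, ∀ w, f w = g i → w = rim i := by
        intro i
        obtain ⟨c, ⟨w0, hw0⟩, hall⟩ := D2 i
        have hchub : c ≠ f (hubv n) := by
          intro he
          have h2 : f (subv (rimE hn3 i0)) = c := hi0.trans he.symm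
          rcases hall _ h2 with h3 | h3
          · exact hubv_ne_subv h3.symm
          · exact rim_ne_subv h3.symm
        have hns : ∀ w, f w = c → w = rim i := by
          intro w hw
          rcases hall w hw with rfl | h
          · exact absurd hw (Ne.symm hchub)
          · exact h
        have hci : g i = c := by
          have h0 := hns w0 hw0
          subst h0
          exact hw0
        intro w hw
        exact hns w (hci ▸ hw)
      have ginj : Function.Injective g := by
        intro a b hab
        exact (rim_inj (pure a (rim b) hab.symm)).symm
      have hCrimCard : Crim.card = n := by
        rw [hCrim, Finset.card_image_of_injective _ ginj, hCardUniv]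
      have hsub : insert c1 (insert (f (hubv n)) Crim) ⊆ Finset.range k := by
        intro c hc
        rcases Finset.mem_insert.mp hc with rfl | hc
        · exact Finset.mem_range.mpr hc1_lt
        rcases Finset.mem_insert.mp hc with rfl | hc
        · exact Finset.mem_range.mpr (hk _)
        · exact hCrimRange hc
      have hcard : n + 2 ≤ (insert c1 (insert (f (hubv n)) Crim)).card := by
        rw [Finset.card_insert_of_notMem, Finset.card_insert_of_notMem, hCrimCard]
        · intro hmem
          obtain ⟨i, _, hi⟩ := Finset.mem_image.mp hmem
          exact hB i hi.symm
        · intro hmem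
          rcases Finset.mem_insert.mp hmem with he | hmem
          · exact hc1_ne_hub he
          · obtain ⟨i, _, hi⟩ := Finset.mem_image.mp hmem
            exact hc1_ne_g i hi.symm
      have := le_trans hcard (le_trans (Finset.card_le_card hsub) (by rw [Finset.card_range]))
      omega
    · push_neg at hA2
      by_cases hA1 : ∃ i, ∀ j, h' i ≠ g j
      · -- some rim-subdivision color is brand new
        obtain ⟨i0, hi0⟩ := hA1
        have hsub : insert c1 (insert (f (hubv n)) (insert (h' i0) Crim)) ⊆ Finset.range k := by
          intro c hc
          rcases Finset.mem_insert.mp hc with rfl | hc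
          · exact Finset.mem_range.mpr hc1_lt
          rcases Finset.mem_insert.mp hc with rfl | hc
          · exact Finset.mem_range.mpr (hk _)
          rcases Finset.mem_insert.mp hc with rfl | hc
          · exact Finset.mem_range.mpr (hk _)
          · exact hCrimRange hc
        have hcard : (n - Q.card) + 3 ≤ (insert c1 (insert (f (hubv n)) (insert (h' i0) Crim))).card := by
          rw [Finset.card_insert_of_notMem, Finset.card_insert_of_notMem,
            Finset.card_insert_of_notMem]
          · have := hRimLB; omega
          · intro hmem
            obtain ⟨i, _, hi⟩ := Finset.mem_image.mp hmem
            exact hi0 i hi.symm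
          · intro hmem
            rcases Finset.mem_insert.mp hmem with he | hmem
            · exact hA2 i0 he.symm
            · obtain ⟨i, _, hi⟩ := Finset.mem_image.mp hmem
              exact hB i hi.symm
          · intro hmem
            rcases Finset.mem_insert.mp hmem with he | hmem
            · exact hc1_ne_hub he
            rcases Finset.mem_insert.mp hmem with he | hmem
            · exact hh_ne_c1 i0 he.symm
            · obtain ⟨i, _, hi⟩ := Finset.mem_image.mp hmem
              exact hc1_ne_g i hi.symm
        have := le_trans hcard (le_trans (Finset.card_le_card hsub) (by rw [Finset.card_range]))
        have hq3 : Q.card ≤ n / 3 := by omega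
        omega
      · -- every rim-subdivision vertex sits in some rim class
        push_neg at hA1
        have hA1' : ∀ i, ∃ j, h' i = g j := by
          intro i
          obtain ⟨j, hj⟩ := hA1 i
          exact ⟨j, hj⟩
        choose jf hjf using hA1'
        have jf_ne : ∀ i, jf i ≠ i := by
          intro i he
          have hadj : (Hg n).Adj (subv (rimE hn3 i)) (rim (jf i)) := by
            rw [hadj_subv_rim, mem_rimE]
            left; rw [he]
          exact hprop _ _ hadj (hjf i)
        have jf_ne1 : ∀ i, jf i ≠ i + 1 := by
          intro i he
          have hadj : (Hg n).Adj (subv (rimE hn3 i)) (rim (jf i)) := by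
            rw [hadj_subv_rim, mem_rimE]
            right; rw [he]
          exact hprop _ _ hadj (hjf i)
        set U : Finset (ZMod n) := Finset.univ \ (Q ∪ Q1 ∪ S) with hU
        have hjU : ∀ i, jf i ∈ U := by
          intro i
          rw [hU, Finset.mem_sdiff]
          refine ⟨Finset.mem_univ _, ?_⟩
          intro hmem
          rcases Finset.mem_union.mp hmem with hmem | hjS
          · rcases Finset.mem_union.mp hmem with hjQ | hjQ1
            · rcases pureQ _ hjQ (subv (rimE hn3 i)) (hjf i) with h | h
              · exact rim_ne_subv h.symm
              · exact rim_ne_subv h.symm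
            · obtain ⟨b, hbQ, hba⟩ := memQ1.mp hjQ1
              have hgb : g (jf i) = g b := by rw [← hba, ← memQ.mp hbQ]
              rcases pureQ _ hbQ (subv (rimE hn3 i)) ((hjf i).trans hgb) with h | h
              · exact rim_ne_subv h.symm
              · exact rim_ne_subv h.symm
          · exact rim_ne_subv (memS.mp hjS (subv (rimE hn3 i)) (hjf i)).symm
        by_cases hq : Q.card < n / 3
        · -- enough rim colors
          have hsub : insert c1 (insert (f (hubv n)) Crim) ⊆ Finset.range k := by
            intro c hc
            rcases Finset.mem_insert.mp hc with rfl | hc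
            · exact Finset.mem_range.mpr hc1_lt
            rcases Finset.mem_insert.mp hc with rfl | hc
            · exact Finset.mem_range.mpr (hk _)
            · exact hCrimRange hc
          have hcard : (n - Q.card) + 2 ≤ (insert c1 (insert (f (hubv n)) Crim)).card := by
            rw [Finset.card_insert_of_notMem, Finset.card_insert_of_notMem]
            · have := hRimLB; omega
            · intro hmem
              obtain ⟨i, _, hi⟩ := Finset.mem_image.mp hmem
              exact hB i hi.symm
            · intro hmem
              rcases Finset.mem_insert.mp hmem with he | hmem
              · exact hc1_ne_hub he
              · obtain ⟨i, _, hi⟩ := Finset.mem_image.mp hmem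
                exact hc1_ne_g i hi.symm
          have := le_trans hcard (le_trans (Finset.card_le_card hsub) (by rw [Finset.card_range]))
          omega
        · -- tight case : contradiction
          exfalso
          have hqe : Q.card = n / 3 := by omega
          -- card of S when n % 3 = 2
          have hScard : (n % 3 = 2) → Q.card + 1 ≤ S.card := by
            intro hr
            set S2 : Finset (ZMod n) := Q.image (· + 2) ∪ Q.image (· - 1) with hS2
            have hS2sub : S2 ⊆ S := by
              intro a ha
              rcases Finset.mem_union.mp ha with ha | ha
              · obtain ⟨b, hbQ, hba⟩ := Finset.mem_image.mp ha
                exact hba ▸ (QS b hbQ).2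
              · obtain ⟨b, hbQ, hba⟩ := Finset.mem_image.mp ha
                exact hba ▸ (QS b hbQ).1
            have hQim1 : Q.image (· - 1) ⊆ S2 := Finset.subset_union_right
            have hQim1card : (Q.image (· - 1)).card = Q.card := by
              apply Finset.card_image_of_injective
              intro a b hab
              have : a - 1 = b - 1 := hab
              linear_combination this
            by_contra hcon
            push_neg at hcon
            have hS2card : S2.card ≤ Q.card := le_trans (Finset.card_le_card hS2sub) (by omega)
            have hS2eq : S2 = Q.image (· - 1) :=
              (Finset.eq_of_subset_of_card_le hQim1 (by omega)).symm
            have hclosed : ∀ a ∈ Q, a + 3 ∈ Q := by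
              intro a haQ
              have h2 : a + 2 ∈ S2 := by
                rw [hS2]
                apply Finset.mem_union_left
                exact Finset.mem_image_of_mem _ haQ
              rw [hS2eq] at h2
              obtain ⟨b, hbQ, hba⟩ := Finset.mem_image.mp h2
              have : b = a + 3 := by linear_combination hba
              exact this ▸ hbQ
            have hstep : ∀ a ∈ Q, ∀ t : ℕ, a + ((3*t : ℕ) : ZMod n) ∈ Q := by
              intro a haQ t
              induction t with
              | zero => simpa using haQ
              | succ t ih =>
                have he : a + ((3*(t+1) : ℕ) : ZMod n) = (a + ((3*t : ℕ) : ZMod n)) + 3 := by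
                  push_cast; ring
                rw [he]
                exact hclosed _ ih
            have hQne : Q.Nonempty := by
              rw [← Finset.card_pos]
              omega
            obtain ⟨a0, ha0⟩ := hQne
            have hkey : a0 + ((3*(n/3+1) : ℕ) : ZMod n) ∈ Q := hstep a0 ha0 (n/3+1)
            have hone : ((3*(n/3+1) : ℕ) : ZMod n) = 1 := by
              have h3 : 3*(n/3+1) = n + 1 := by omega
              rw [h3]
              push_cast [ZMod.natCast_self]
              ring
            rw [hone] at hkey
            exact QQ1 a0 ha0 hkey
          -- |U| ≤ 1
          have hUcard : U.card ≤ 1 := by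
            have h1 : U.card = n - (2 * Q.card + S.card) := by
              rw [hU, Finset.card_sdiff_of_subset (Finset.subset_univ _), hUnionCard, hCardUniv]
            by_cases hr : n % 3 = 2
            · have := hScard hr
              omega
            · have h2 : n % 3 < 3 := Nat.mod_lt _ (by omega)
              omega
          have huniq : ∀ x ∈ U, ∀ y ∈ U, x = y := Finset.card_le_one.mp hUcard
          have h1 : jf (jf 0) = jf 0 := huniq _ (hjU (jf 0)) _ (hjU 0)
          exact jf_ne (jf 0) h1



-- ======== n = 3 lower bound ========

lemma nbhd_rim3 {i : ZMod 3} {w : VH 3} (h : (Hg 3).Adj (rim i) w) :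
    w = subv (spokeE i) ∨ w = subv (rimE (le_refl 3) (i-1)) ∨ w = subv (rimE (le_refl 3) i) := by
  have hn3 : (3:ℕ) ≤ 3 := le_refl 3
  match w with
  | Sum.inl (Sum.inl u) =>
    exfalso
    obtain ⟨hne, hn2⟩ := hadj_rim_rim.mp h
    have hall : ∀ i u : ZMod 3, i ≠ u → (i - u = 1 ∨ u - i = 1) := by decide
    exact hn2 (hall i u hne)
  | Sum.inl (Sum.inr u) =>
    exfalso
    have hu : u = 0 := Subsingleton.elim u 0
    subst hu
    exact not_hadj_rim_hub h
  | Sum.inr e =>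
    rcases edge_cases hn3 e with ⟨j, rfl⟩ | ⟨j, rfl⟩
    · have hx : (Sum.inl i : VW 3) ∈ ((spokeE j : (Wg 3).edgeSet) : Sym2 (VW 3)) := h
      rw [mem_spokeE] at hx
      rcases hx with hx | hx
      · left
        rw [Sum.inl.inj hx]
        rfl
      · exact absurd hx (by simp)
    · have hx : (Sum.inl i : VW 3) ∈ ((rimE hn3 j : (Wg 3).edgeSet) : Sym2 (VW 3)) := h
      rw [mem_rimE] at hx
      rcases hx with hx | hx
      · right; right
        rw [Sum.inl.inj hx]
        rfl
      · right; left
        have hji : j = i - 1 := by linear_combination - (Sum.inl.inj hx)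
        rw [hji]
        rfl

lemma six_le {k a b c d e f : ℕ} (ha : a < k) (hb : b < k) (hc : c < k) (hd : d < k)
    (he : e < k) (hf : f < k)
    (h1 : a ≠ b) (h2 : a ≠ c) (h3 : a ≠ d) (h4 : a ≠ e) (h5 : a ≠ f)
    (h6 : b ≠ c) (h7 : b ≠ d) (h8 : b ≠ e) (h9 : b ≠ f)
    (h10 : c ≠ d) (h11 : c ≠ e) (h12 : c ≠ f)
    (h13 : d ≠ e) (h14 : d ≠ f) (h15 : e ≠ f) : 6 ≤ k := by
  have hsub : ({a,b,c,d,e,f} : Finset ℕ) ⊆ Finset.range k := by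
    intro x hx
    simp only [Finset.mem_insert, Finset.mem_singleton] at hx
    rcases hx with rfl|rfl|rfl|rfl|rfl|rfl <;> exact Finset.mem_range.mpr ‹_›
  have hcard : ({a,b,c,d,e,f} : Finset ℕ).card = 6 := by
    rw [Finset.card_insert_of_notMem (by simp [h1,h2,h3,h4,h5]),
      Finset.card_insert_of_notMem (by simp [h6,h7,h8,h9]),
      Finset.card_insert_of_notMem (by simp [h10,h11,h12]),
      Finset.card_insert_of_notMem (by simp [h13,h14]),
      Finset.card_insert_of_notMem (by simp [h15]), Finset.card_singleton]
  calc 6 = ({a,b,c,d,e,f} : Finset ℕ).card := hcard.symm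
    _ ≤ (Finset.range k).card := Finset.card_le_card hsub
    _ = k := Finset.card_range k

lemma lower3 (f : VH 3 → ℕ) (hf : IsTDColoring (Hg 3) f) (k : ℕ)
    (hk : ∀ v, f v < k) : 6 ≤ k := by
  classical
  have hn3 : (3:ℕ) ≤ 3 := le_refl 3
  obtain ⟨hprop, hdom⟩ := hf
  have D3 : ∀ i : ZMod 3, ∃ c, (∃ w, f w = c) ∧ ∀ w, f w = c → w = rim i ∨ w = rim (i+1) := by
    intro i
    obtain ⟨c, hne, hall⟩ := hdom (subv (rimE hn3 i))
    exact ⟨c, hne, fun w hw => nbhd_rimE hn3 (hall w hw)⟩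
  have D4 : ∀ i : ZMod 3, ∃ c, (∃ w, f w = c) ∧ ∀ w, f w = c →
      w = subv (spokeE i) ∨ w = subv (rimE hn3 (i-1)) ∨ w = subv (rimE hn3 i) := by
    intro i
    obtain ⟨c, hne, hall⟩ := hdom (rim i)
    exact ⟨c, hne, fun w hw => nbhd_rim3 (hall w hw)⟩
  choose c3 hw3 hsub3 using D3
  choose c4 hw4 hsub4 using D4
  have hlt3 : ∀ i, c3 i < k := by
    intro i; obtain ⟨w, hw⟩ := hw3 i; exact hw ▸ hk w
  have hlt4 : ∀ i, c4 i < k := by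
    intro i; obtain ⟨w, hw⟩ := hw4 i; exact hw ▸ hk w
  have hne3h : ∀ i, c3 i ≠ f (hubv 3) := by
    intro i he
    rcases hsub3 i (hubv 3) he.symm with h | h <;> exact rim_ne_hubv h.symm
  have hne4h : ∀ i, c4 i ≠ f (hubv 3) := by
    intro i he
    rcases hsub4 i (hubv 3) he.symm with h | h | h <;> exact hubv_ne_subv h
  have hne34 : ∀ i j, c3 i ≠ c4 j := by
    intro i j he
    obtain ⟨w, hw⟩ := hw3 i
    have h2 : f w = c4 j := hw.trans he
    rcases hsub3 i w hw with h | h <;> subst h <;>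
      rcases hsub4 j _ h2 with h3 | h3 | h3 <;> exact rim_ne_subv h3
  have hs_ne3 : ∀ (x : ZMod 3) i, f (subv (spokeE x)) ≠ c3 i := by
    intro x i he
    rcases hsub3 i _ he with h | h <;> exact rim_ne_subv h.symm
  have hs_ne_h : ∀ (x : ZMod 3), f (hubv 3) ≠ f (subv (spokeE x)) := by
    intro x
    apply hprop
    rw [hadj_hub_subv, mem_spokeE]
    right; rfl
  have edis : ∀ (p q : ZMod 3), p ≠ q → subv (rimE hn3 p) ≠ subv (rimE hn3 q) :=
    fun p q hpq hq => hpq (rimE_inj hn3 (subv_inj hq))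
  have edis2 : ∀ (p q : ZMod 3), (subv (spokeE p) : VH 3) ≠ subv (rimE hn3 q) :=
    fun p q hq => spokeE_ne_rimE hn3 _ _ (subv_inj hq)
  have edis3 : ∀ (p q : ZMod 3), p ≠ q → (subv (spokeE p) : VH 3) ≠ subv (spokeE q) :=
    fun p q hpq hq => hpq (spokeE_inj (subv_inj hq))
  have hc3pair : ∃ a b : ZMod 3, c3 a ≠ c3 b := by
    by_contra hcon
    push_neg at hcon
    obtain ⟨w, hw⟩ := hw3 0
    have h1 : f w = c3 1 := hw.trans (hcon 0 1)
    have h2 : f w = c3 2 := hw.trans (hcon 0 2)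
    rcases hsub3 0 w hw with h | h <;> subst h
    · rcases hsub3 1 _ h1 with h3 | h3 <;>
        · have := rim_inj h3
          revert this
          decide
    · rcases hsub3 2 _ h2 with h3 | h3 <;>
        · have := rim_inj h3
          revert this
          decide
  obtain ⟨a, b, hab⟩ := hc3pair
  have main : ∀ x y t z : ZMod 3, c4 x = c4 y →
      (∀ w : VH 3, (w = subv (spokeE x) ∨ w = subv (rimE hn3 (x-1)) ∨ w = subv (rimE hn3 x)) →
        (w = subv (spokeE y) ∨ w = subv (rimE hn3 (y-1)) ∨ w = subv (rimE hn3 y)) →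
        w = subv (rimE hn3 t)) →
      (∀ w : VH 3, (w = subv (spokeE z) ∨ w = subv (rimE hn3 (z-1)) ∨ w = subv (rimE hn3 z)) →
        w ≠ subv (rimE hn3 t)) →
      ((subv (spokeE x) : VH 3) ≠ subv (rimE hn3 t)) →
      (∀ w : VH 3, (w = subv (spokeE z) ∨ w = subv (rimE hn3 (z-1)) ∨ w = subv (rimE hn3 z)) →
        w ≠ subv (spokeE x)) →
      6 ≤ k := by
    intro x y t z hxy hint hzt hsx hzx
    have hpure : ∀ w, f w = c4 x → w = subv (rimE hn3 t) :=
      fun w hw => hint w (hsub4 x w hw) (hsub4 y w (hw.trans hxy))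
    have hxz4 : c4 x ≠ c4 z := by
      intro he
      obtain ⟨w, hw⟩ := hw4 z
      exact hzt w (hsub4 z w hw) (hpure w (hw.trans he.symm))
    have hs4x : f (subv (spokeE x)) ≠ c4 x := by
      intro he
      exact hsx (hpure _ he)
    have hs4z : f (subv (spokeE x)) ≠ c4 z := by
      intro he
      exact hzx _ (hsub4 z _ he) rfl
    exact six_le (hlt3 a) (hlt3 b) (hk (hubv 3)) (hlt4 x) (hlt4 z) (hk (subv (spokeE x)))
      hab (hne3h a) (hne34 a x) (hne34 a z) (Ne.symm (hs_ne3 x a))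
      (hne3h b) (hne34 b x) (hne34 b z) (Ne.symm (hs_ne3 x b))
      (Ne.symm (hne4h x)) (Ne.symm (hne4h z)) (hs_ne_h x)
      hxz4 (Ne.symm hs4x) (Ne.symm hs4z)
  by_cases h01 : c4 0 = c4 1
  · exact main 0 1 0 2 h01
      (by intro w h1 h2
          rcases h1 with rfl|rfl|rfl <;> rcases h2 with h2|h2|h2 <;>
            first
            | rfl
            | (exact congrArg subv (congrArg (rimE hn3) (by decide)))
            | (exact absurd h2 (edis3 _ _ (by decide)))
            | (exact absurd h2 (edis2 _ _))
            | (exact absurd h2 (edis2 _ _).symm)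
            | (exact absurd h2 (edis _ _ (by decide))))
      (by intro w h1
          rcases h1 with rfl|rfl|rfl <;>
            first
            | exact edis2 _ _
            | exact edis _ _ (by decide))
      (edis2 _ _)
      (by intro w h1
          rcases h1 with rfl|rfl|rfl <;>
            first
            | exact edis3 _ _ (by decide)
            | exact (edis2 _ _).symm)
  by_cases h12 : c4 1 = c4 2
  · exact main 1 2 1 0 h12
      (by intro w h1 h2
          rcases h1 with rfl|rfl|rfl <;> rcases h2 with h2|h2|h2 <;>
            first
            | rfl
            | (exact congrArg subv (congrArg (rimE hn3) (by decide)))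
            | (exact absurd h2 (edis3 _ _ (by decide)))
            | (exact absurd h2 (edis2 _ _))
            | (exact absurd h2 (edis2 _ _).symm)
            | (exact absurd h2 (edis _ _ (by decide))))
      (by intro w h1
          rcases h1 with rfl|rfl|rfl <;>
            first
            | exact edis2 _ _
            | exact edis _ _ (by decide))
      (edis2 _ _)
      (by intro w h1
          rcases h1 with rfl|rfl|rfl <;>
            first
            | exact edis3 _ _ (by decide)
            | exact (edis2 _ _).symm)
  by_cases h02 : c4 0 = c4 2
  · exact main 0 2 2 1 h02
      (by intro w h1 h2
          rcases h1 with rfl|rfl|rfl <;> rcases h2 with h2|h2|h2 <;>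
            first
            | rfl
            | (exact congrArg subv (congrArg (rimE hn3) (by decide)))
            | (exact absurd h2 (edis3 _ _ (by decide)))
            | (exact absurd h2 (edis2 _ _))
            | (exact absurd h2 (edis2 _ _).symm)
            | (exact absurd h2 (edis _ _ (by decide))))
      (by intro w h1
          rcases h1 with rfl|rfl|rfl <;>
            first
            | exact edis2 _ _
            | exact edis _ _ (by decide))
      (edis2 _ _)
      (by intro w h1
          rcases h1 with rfl|rfl|rfl <;>
            first
            | exact edis3 _ _ (by decide)
            | exact (edis2 _ _).symm)
  · exact six_le (hlt3 a) (hlt3 b) (hk (hubv 3)) (hlt4 0) (hlt4 1) (hlt4 2)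
      hab (hne3h a) (hne34 a 0) (hne34 a 1) (hne34 a 2)
      (hne3h b) (hne34 b 0) (hne34 b 1) (hne34 b 2)
      (Ne.symm (hne4h 0)) (Ne.symm (hne4h 1)) (Ne.symm (hne4h 2))
      h01 h02 h12


-- ======== decidability instances and small-case upper bounds ========

instance cycleG.adjDecidable (n : ℕ) : DecidableRel (cycleG n).Adj := fun i j =>
  inferInstanceAs (Decidable (i ≠ j ∧ (i - j = 1 ∨ j - i = 1)))

instance Wg.adjDecidable (n : ℕ) : DecidableRel (Wg n).Adj := fun x y =>
  match x, y with
  | Sum.inl u, Sum.inl v => inferInstanceAs (Decidable ((cycleG n).Adj u v))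
  | Sum.inr _, Sum.inr _ => inferInstanceAs (Decidable False)
  | Sum.inl _, Sum.inr _ => inferInstanceAs (Decidable True)
  | Sum.inr _, Sum.inl _ => inferInstanceAs (Decidable True)

instance Hg.adjDecidable (n : ℕ) : DecidableRel (Hg n).Adj := fun x y =>
  match x, y with
  | Sum.inl u, Sum.inl v => inferInstanceAs (Decidable (u ≠ v ∧ ¬ (Wg n).Adj u v))
  | Sum.inl u, Sum.inr e => inferInstanceAs (Decidable (u ∈ (e : Sym2 (VW n))))
  | Sum.inr e, Sum.inl u => inferInstanceAs (Decidable (u ∈ (e : Sym2 (VW n))))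
  | Sum.inr _, Sum.inr _ => inferInstanceAs (Decidable False)

def f3 : VH 3 → ℕ := fun v =>
  match v with
  | Sum.inl (Sum.inl u) => if u = 0 then 0 else 1
  | Sum.inl (Sum.inr _) => 2
  | Sum.inr e => if (Sum.inr 0 : VW 3) ∈ (e : Sym2 (VW 3)) then 3
      else if (Sum.inl 2 : VW 3) ∈ (e : Sym2 (VW 3)) ∧ (Sum.inl 0 : VW 3) ∈ (e : Sym2 (VW 3)) then 5
      else 4

def f45 (n : ℕ) : VH n → ℕ := fun v =>
  match v with
  | Sum.inl (Sum.inl u) => u.val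
  | Sum.inl (Sum.inr _) => n + 1
  | Sum.inr e => if (Sum.inr 0 : VW n) ∈ (e : Sym2 (VW n)) then n else n + 1

lemma upper3 : ∃ f : VH 3 → ℕ, IsTDColoring (Hg 3) f ∧ ∀ v, f v < 6 := by
  refine ⟨f3, ⟨?_, ?_⟩, ?_⟩
  · exact (by decide : ∀ u v, (Hg 3).Adj u v → f3 u ≠ f3 v)
  · have h := (by decide :
      ∀ v : VH 3, ∃ c ∈ Finset.range 6, (∃ w, f3 w = c) ∧ ∀ w, f3 w = c → (Hg 3).Adj v w)
    intro v
    obtain ⟨c, -, hc⟩ := h v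
    exact ⟨c, hc⟩
  · decide

lemma upper4 : ∃ f : VH 4 → ℕ, IsTDColoring (Hg 4) f ∧ ∀ v, f v < 6 := by
  refine ⟨f45 4, ⟨?_, ?_⟩, ?_⟩
  · exact (by decide : ∀ u v, (Hg 4).Adj u v → f45 4 u ≠ f45 4 v)
  · have h := (by decide :
      ∀ v : VH 4, ∃ c ∈ Finset.range 6, (∃ w, f45 4 w = c) ∧ ∀ w, f45 4 w = c → (Hg 4).Adj v w)
    intro v
    obtain ⟨c, -, hc⟩ := h v
    exact ⟨c, hc⟩
  · decide

lemma upper5 : ∃ f : VH 5 → ℕ, IsTDColoring (Hg 5) f ∧ ∀ v, f v < 7 := by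
  refine ⟨f45 5, ⟨?_, ?_⟩, ?_⟩
  · exact (by decide : ∀ u v, (Hg 5).Adj u v → f45 5 u ≠ f45 5 v)
  · have h := (by decide :
      ∀ v : VH 5, ∃ c ∈ Finset.range 7, (∃ w, f45 5 w = c) ∧ ∀ w, f45 5 w = c → (Hg 5).Adj v w)
    intro v
    obtain ⟨c, -, hc⟩ := h v
    exact ⟨c, hc⟩
  · decide


-- ======== n ≥ 6 upper bound ========

def cfun (m x : ℕ) : ℕ :=
  if 3*m ≤ x then x - m else 2*(x/3) + (if x % 3 = 0 then 0 else 1)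

lemma cfun_lt {n : ℕ} (hn : 6 ≤ n) {x : ℕ} (hx : x < n) :
    cfun (n/3) x < 2*(n/3) + n % 3 := by
  unfold cfun
  split_ifs <;> omega

lemma cfun_collide {n : ℕ} (hn : 6 ≤ n) {x y : ℕ} (hx : x < n) (hy : y < n) (hxy : x ≠ y)
    (h : cfun (n/3) x = cfun (n/3) y) :
    (y = x + 1 ∧ x % 3 = 1 ∧ x < 3*(n/3)) ∨ (x = y + 1 ∧ y % 3 = 1 ∧ y < 3*(n/3)) := by
  unfold cfun at h
  split_ifs at h <;> omega

lemma val_inj' {n : ℕ} [NeZero n] {i j : ZMod n} (h : i.val = j.val) : i = j :=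
  ZMod.val_injective n h

lemma val_add_one {n : ℕ} (hn : 3 ≤ n) (i : ZMod n) :
    (i+1).val = if i.val + 1 = n then 0 else i.val + 1 := by
  haveI : NeZero n := ⟨by omega⟩
  haveI : Fact (1 < n) := ⟨by omega⟩
  rw [ZMod.val_add, ZMod.val_one]
  have h := ZMod.val_lt i
  split_ifs with h1
  · rw [h1, Nat.mod_self]
  · exact Nat.mod_eq_of_lt (by omega)

def f6 (n : ℕ) : VH n → ℕ := fun v =>
  match v with
  | Sum.inl (Sum.inl u) => cfun (n/3) u.val
  | Sum.inl (Sum.inr _) => 2*(n/3) + n % 3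
  | Sum.inr e => if (Sum.inr 0 : VW n) ∈ (e : Sym2 (VW n)) then 2*(n/3) + n % 3 + 1
      else 2*(n/3) + n % 3 + 2

lemma upper6 {n : ℕ} (hn : 6 ≤ n) :
    ∃ f : VH n → ℕ, IsTDColoring (Hg n) f ∧ ∀ v, f v < 2*(n/3) + n % 3 + 3 := by
  haveI : NeZero n := ⟨by omega⟩
  have hn3 : 3 ≤ n := by omega
  have hm2 : 2 ≤ n / 3 := by omega
  -- evaluation lemmas
  have hflt : ∀ u : ZMod n, f6 n (rim u) < 2*(n/3) + n % 3 :=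
    fun u => cfun_lt hn (ZMod.val_lt u)
  have hfhub : f6 n (hubv n) = 2*(n/3) + n % 3 := rfl
  have hfsub_ge : ∀ e : (Wg n).edgeSet, 2*(n/3) + n % 3 + 1 ≤ f6 n (Sum.inr e) := by
    intro e
    show 2*(n/3) + n % 3 + 1 ≤ (if (Sum.inr 0 : VW n) ∈ (e : Sym2 (VW n)) then _ else _)
    split_ifs <;> omega
  have hfsub_le : ∀ e : (Wg n).edgeSet, f6 n (Sum.inr e) ≤ 2*(n/3) + n % 3 + 2 := by
    intro e
    show (if (Sum.inr 0 : VW n) ∈ (e : Sym2 (VW n)) then _ else _) ≤ 2*(n/3) + n % 3 + 2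
    split_ifs <;> omega
  have hfsp : ∀ i : ZMod n, f6 n (subv (spokeE i)) = 2*(n/3) + n % 3 + 1 := by
    intro i
    show (if (Sum.inr 0 : VW n) ∈ ((spokeE i : (Wg n).edgeSet) : Sym2 (VW n))
        then 2*(n/3) + n % 3 + 1 else 2*(n/3) + n % 3 + 2) = 2*(n/3) + n % 3 + 1
    rw [if_pos (mem_spokeE.mpr (Or.inr rfl))]
  -- uniqueness helpers
  have huniq : ∀ (u j : ZMod n),
      ((j.val % 3 = 0 ∧ j.val < 3*(n/3)) ∨ 3*(n/3) ≤ j.val) →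
      f6 n (rim u) = f6 n (rim j) → u = j := by
    intro u j hj h
    by_cases huj : u = j
    · exact huj
    exfalso
    have hne : u.val ≠ j.val := fun hv => huj (val_inj' hv)
    rcases cfun_collide hn (ZMod.val_lt u) (ZMod.val_lt j) hne h with ⟨h1,h2,h3⟩ | ⟨h1,h2,h3⟩ <;>
      omega
  have hpair : ∀ (u i : ZMod n), i.val % 3 = 1 → i.val < 3*(n/3) →
      f6 n (rim u) = f6 n (rim i) → u = i ∨ u = i + 1 := by
    intro u i h1 h2 h
    by_cases huj : u = i
    · exact Or.inl huj
    right
    have hne : u.val ≠ i.val := fun hv => huj (val_inj' hv)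
    rcases cfun_collide hn (ZMod.val_lt u) (ZMod.val_lt i) hne h with ⟨ha,hb,hc⟩ | ⟨ha,hb,hc⟩
    · exfalso; omega
    · apply val_inj'
      rw [val_add_one hn3, if_neg (by omega)]
      exact ha
  refine ⟨f6 n, ⟨?_, ?_⟩, ?_⟩
  · -- proper
    rintro ((i | a) | e) ((j | b) | e') hadj h
    · -- rim rim
      obtain ⟨hne, hnadj⟩ := hadj_rim_rim.mp hadj
      have hvne : i.val ≠ j.val := fun hv => hne (val_inj' hv)
      rcases cfun_collide hn (ZMod.val_lt i) (ZMod.val_lt j) hvne h with ⟨h1,h2,h3⟩ | ⟨h1,h2,h3⟩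
      · apply hnadj
        right
        have hj : j = i + 1 := by
          apply val_inj'
          rw [val_add_one hn3, if_neg (by omega)]
          exact h1
        rw [hj]
        exact add_sub_cancel_left i 1
      · apply hnadj
        left
        have hi : i = j + 1 := by
          apply val_inj'
          rw [val_add_one hn3, if_neg (by omega)]
          exact h1
        rw [hi]
        exact add_sub_cancel_left j 1
    · exact hadj.2 wadj_rim_hub
    · have h1 := hflt i
      have h2 := hfsub_ge e'
      have h3 : f6 n (rim i) = f6 n (Sum.inr e') := h
      omega
    · exact hadj.2 wadj_hub_rim
    · exact hadj.1 (by rw [Subsingleton.elim a b])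
    · have h2 := hfsub_ge e'
      have h3 : f6 n (hubv n) = f6 n (Sum.inr e') := h
      rw [hfhub] at h3
      omega
    · have h1 := hflt j
      have h2 := hfsub_ge e
      have h3 : f6 n (Sum.inr e) = f6 n (rim j) := h
      omega
    · have h2 := hfsub_ge e
      have h3 : f6 n (Sum.inr e) = f6 n (hubv n) := h
      rw [hfhub] at h3
      omega
    · exact hadj
  · -- domination
    rintro ((i | a) | e)
    · -- rim vertex
      by_cases hcond : i.val ≤ 1 ∨ i.val = n - 1
      · -- use the singleton {rim 3}
        refine ⟨f6 n (rim 3), ⟨rim 3, rfl⟩, ?_⟩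
        have hval3 : (3 : ZMod n).val = 3 := by
          have h0 : ((3:ℕ) : ZMod n).val = 3 := ZMod.val_cast_of_lt (by omega)
          simpa using h0
        intro w hw
        rcases w with (u' | u') | e'
        · have hu : u' = (3 : ZMod n) :=
            huniq u' 3 (by rw [hval3]; left; exact ⟨by norm_num, by omega⟩) hw
          subst hu
          show (Hg n).Adj (rim i) (rim 3)
          rw [hadj_rim_rim]
          constructor
          · intro hij
            rw [hij] at hcond
            rw [hval3] at hcond
            omega
          · rintro (hs | hs)
            · have h4 : i = ((4:ℕ) : ZMod n) := by push_cast; linear_combination hs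
              have h5 : i.val = 4 := by rw [h4]; exact ZMod.val_cast_of_lt (by omega)
              omega
            · have h4 : i = ((2:ℕ) : ZMod n) := by push_cast; linear_combination -hs
              have h5 : i.val = 2 := by rw [h4]; exact ZMod.val_cast_of_lt (by omega)
              omega
        · exfalso
          have h1 := hflt (3 : ZMod n)
          have h3 : f6 n (hubv n) = f6 n (rim 3) := hw
          rw [hfhub] at h3
          omega
        · exfalso
          have h1 := hflt (3 : ZMod n)
          have h2 := hfsub_ge e'
          have h3 : f6 n (Sum.inr e') = f6 n (rim 3) := hw
          omega
      · -- use the singleton {rim 0}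
        refine ⟨f6 n (rim 0), ⟨rim 0, rfl⟩, ?_⟩
        have hval0 : (0 : ZMod n).val = 0 := ZMod.val_zero
        intro w hw
        rcases w with (u' | u') | e'
        · have hu : u' = (0 : ZMod n) :=
            huniq u' 0 (by rw [hval0]; left; exact ⟨by norm_num, by omega⟩) hw
          subst hu
          show (Hg n).Adj (rim i) (rim 0)
          rw [hadj_rim_rim]
          constructor
          · intro hij
            rw [hij, hval0] at hcond
            omega
          · rintro (hs | hs)
            · have h4 : i = ((1:ℕ) : ZMod n) := by push_cast; linear_combination hs
              have h5 : i.val = 1 := by rw [h4]; exact ZMod.val_cast_of_lt (by omega)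
              omega
            · have h4 : i + 1 = 0 := by linear_combination -hs
              have h5 := congrArg ZMod.val h4
              rw [val_add_one hn3, hval0] at h5
              by_cases hco : i.val + 1 = n
              · omega
              · rw [if_neg hco] at h5
                omega
        · exfalso
          have h1 := hflt (0 : ZMod n)
          have h3 : f6 n (hubv n) = f6 n (rim 0) := hw
          rw [hfhub] at h3
          omega
        · exfalso
          have h1 := hflt (0 : ZMod n)
          have h2 := hfsub_ge e'
          have h3 : f6 n (Sum.inr e') = f6 n (rim 0) := hw
          omega
    · -- hub vertex : spoke class
      refine ⟨2*(n/3) + n % 3 + 1, ⟨subv (spokeE 0), hfsp 0⟩, ?_⟩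
      intro w hw
      rcases w with (u' | u') | e'
      · exfalso
        have h1 := hflt u'
        have h3 : f6 n (rim u') = 2*(n/3) + n % 3 + 1 := hw
        omega
      · exfalso
        have h3 : f6 n (hubv n) = 2*(n/3) + n % 3 + 1 := hw
        rw [hfhub] at h3
        omega
      · have h3 : (if (Sum.inr 0 : VW n) ∈ ((e' : (Wg n).edgeSet) : Sym2 (VW n))
            then 2*(n/3) + n % 3 + 1 else 2*(n/3) + n % 3 + 2) = 2*(n/3) + n % 3 + 1 := hw
        split_ifs at h3 with hmem
        · have hadj : (Hg n).Adj (hubv n) (Sum.inr e') := hmem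
          have hsa : Sum.inl (Sum.inr a) = hubv n := by
            show Sum.inl (Sum.inr a) = (Sum.inl (Sum.inr 0) : VH n)
            rw [Subsingleton.elim a 0]
          rw [hsa]
          exact hadj
        · omega
    · -- subdivision vertex
      rcases edge_cases hn3 e with ⟨i, rfl⟩ | ⟨i, rfl⟩
      · -- spoke : hub's class
        refine ⟨2*(n/3) + n % 3, ⟨hubv n, hfhub⟩, ?_⟩
        intro w hw
        rcases w with (u' | u') | e'
        · exfalso
          have h1 := hflt u'
          have h3 : f6 n (rim u') = 2*(n/3) + n % 3 := hw
          omega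
        · have hsa : Sum.inl (Sum.inr u') = hubv n := by
            show Sum.inl (Sum.inr u') = (Sum.inl (Sum.inr 0) : VH n)
            rw [Subsingleton.elim u' 0]
          rw [hsa]
          show (Hg n).Adj (subv (spokeE i)) (hubv n)
          rw [hadj_subv_hub]
          exact mem_spokeE.mpr (Or.inr rfl)
        · exfalso
          have h2 := hfsub_ge e'
          have h3 : f6 n (Sum.inr e') = 2*(n/3) + n % 3 := hw
          omega
      · -- rim edge
        have hkill_hub : ∀ j : ZMod n, f6 n (hubv n) = f6 n (rim j) → False := by
          intro j hw
          have h1 := hflt j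
          rw [hfhub] at hw
          omega
        have hkill_sub : ∀ (e' : (Wg n).edgeSet) (j : ZMod n),
            f6 n (Sum.inr e') = f6 n (rim j) → False := by
          intro e' j hw
          have h1 := hflt j
          have h2 := hfsub_ge e'
          omega
        by_cases hc1 : i.val % 3 = 1 ∧ i.val < 3*(n/3)
        · -- pair class {rim i, rim (i+1)}
          refine ⟨f6 n (rim i), ⟨rim i, rfl⟩, ?_⟩
          intro w hw
          rcases w with (u' | u') | e'
          · rcases hpair u' i hc1.1 hc1.2 hw with hu | hu
            · rw [hu]
              show (Hg n).Adj (subv (rimE hn3 i)) (rim i)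
              rw [hadj_subv_rim]
              exact mem_rimE.mpr (Or.inl rfl)
            · rw [hu]
              show (Hg n).Adj (subv (rimE hn3 i)) (rim (i+1))
              rw [hadj_subv_rim]
              exact mem_rimE.mpr (Or.inr rfl)
          · exact absurd hw (fun hw => hkill_hub i hw)
          · exact absurd hw (fun hw => hkill_sub e' i hw)
        · by_cases hc2 : i.val % 3 = 2 ∧ i.val < 3*(n/3)
          · -- singleton class {rim (i+1)}
            refine ⟨f6 n (rim (i+1)), ⟨rim (i+1), rfl⟩, ?_⟩
            have hsucc : (((i+1).val % 3 = 0 ∧ (i+1).val < 3*(n/3)) ∨ 3*(n/3) ≤ (i+1).val) := by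
              rw [val_add_one hn3]
              have hv := ZMod.val_lt i
              split_ifs with hco <;> omega
            intro w hw
            rcases w with (u' | u') | e'
            · have hu : u' = i + 1 := huniq u' (i+1) hsucc hw
              rw [hu]
              show (Hg n).Adj (subv (rimE hn3 i)) (rim (i+1))
              rw [hadj_subv_rim]
              exact mem_rimE.mpr (Or.inr rfl)
            · exact absurd hw (fun hw => hkill_hub (i+1) hw)
            · exact absurd hw (fun hw => hkill_sub e' (i+1) hw)
          · -- singleton class {rim i}
            refine ⟨f6 n (rim i), ⟨rim i, rfl⟩, ?_⟩
            have hsing : ((i.val % 3 = 0 ∧ i.val < 3*(n/3)) ∨ 3*(n/3) ≤ i.val) := by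
              have hv := ZMod.val_lt i
              omega
            intro w hw
            rcases w with (u' | u') | e'
            · have hu : u' = i := huniq u' i hsing hw
              rw [hu]
              show (Hg n).Adj (subv (rimE hn3 i)) (rim i)
              rw [hadj_subv_rim]
              exact mem_rimE.mpr (Or.inl rfl)
            · exact absurd hw (fun hw => hkill_hub i hw)
            · exact absurd hw (fun hw => hkill_sub e' i hw)
  · -- bound
    rintro ((i | a) | e)
    · have h1 := hflt i
      show cfun (n/3) i.val < 2*(n/3) + n % 3 + 3
      have h3 : f6 n (rim i) = cfun (n/3) i.val := rfl
      omega
    · show 2*(n/3) + n % 3 < 2*(n/3) + n % 3 + 3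
      omega
    · have h2 := hfsub_le e
      omega


lemma tdcn_eq (n : ℕ) (hn : 3 ≤ n) :
    tdcn (Hg n) = (if n = 3 then 6 else n - n/3 + 3) := by
  have hup : (if n = 3 then 6 else n - n/3 + 3) ∈
      {k | ∃ f : VH n → ℕ, IsTDColoring (Hg n) f ∧ ∀ v, f v < k} := by
    by_cases h3 : n = 3
    · subst h3
      rw [if_pos rfl]
      exact upper3
    rw [if_neg h3]
    by_cases h4 : n = 4
    · subst h4
      have he : (4:ℕ) - 4/3 + 3 = 6 := by norm_num
      rw [he]
      exact upper4
    by_cases h5 : n = 5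
    · subst h5
      have he : (5:ℕ) - 5/3 + 3 = 7 := by norm_num
      rw [he]
      exact upper5
    · have h6 : 6 ≤ n := by omega
      have he : n - n/3 + 3 = 2*(n/3) + n % 3 + 3 := by omega
      rw [he]
      exact upper6 h6
  have hlow : ∀ k ∈ {k | ∃ f : VH n → ℕ, IsTDColoring (Hg n) f ∧ ∀ v, f v < k},
      (if n = 3 then 6 else n - n/3 + 3) ≤ k := by
    intro k hk
    obtain ⟨f, hf, hb⟩ := hk
    by_cases h3 : n = 3
    · subst h3
      rw [if_pos rfl]
      exact lower3 f hf k hb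
    · rw [if_neg h3]
      exact lower_ge (by omega) f hf k hb
  refine le_antisymm (Nat.sInf_le hup) ?_
  have hne : {k | ∃ f : VH n → ℕ, IsTDColoring (Hg n) f ∧ ∀ v, f v < k}.Nonempty := ⟨_, hup⟩
  exact hlow _ (Nat.sInf_mem hne)

end TDCW

theorem tdcn_central_wheel (n : ℕ) (hn : 3 ≤ n) :
    (n % 3 = 0 ∧ n ≠ 3 →
      tdcn (centralGraph (joinGraph (cycleG n) (⊥ : SimpleGraph (Fin 1)))) =
        2 * n / 3 + 3) ∧
    (¬ (n % 3 = 0 ∧ n ≠ 3) →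
      tdcn (centralGraph (joinGraph (cycleG n) (⊥ : SimpleGraph (Fin 1)))) =
        2 * n / 3 + 4) := by
  have heq := TDCW.tdcn_eq n hn
  constructor
  · rintro ⟨hm, hne⟩
    rw [heq, if_neg hne]
    omega
  · intro h
    by_cases h3 : n = 3
    · subst h3
      rw [heq, if_pos rfl]
    · have hm : n % 3 ≠ 0 := by
        intro hm0
        exact h ⟨hm0, h3⟩
      rw [heq, if_neg h3]
      omega
end

section
/- For every integer n ≥ 1, the total dominator chromatic number of the central graph of the double star S_{1,n,n} equals n + 3. -/
open SimpleGraph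

def vt (n k : ℕ) : Fin (2*n+1) := ⟨k % (2*n+1), Nat.mod_lt _ (by omega)⟩

lemma vt_val (n k : ℕ) (h : k ≤ 2*n) : ((vt n k) : ℕ) = k := Nat.mod_eq_of_lt (by omega)

lemma ds_adj (n : ℕ) (a b : Fin (2*n+1)) : (doubleStar n).Adj a b ↔
    ((a:ℕ) ≠ (b:ℕ) ∧ (((a:ℕ)=0 ∧ 1 ≤ (b:ℕ) ∧ (b:ℕ) ≤ n) ∨ ((b:ℕ)=0 ∧ 1 ≤ (a:ℕ) ∧ (a:ℕ) ≤ n) ∨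
      (1 ≤ (a:ℕ) ∧ (a:ℕ) ≤ n ∧ (b:ℕ) = (a:ℕ)+n) ∨ (1 ≤ (b:ℕ) ∧ (b:ℕ) ≤ n ∧ (a:ℕ) = (b:ℕ)+n))) := by
  unfold doubleStar
  rw [SimpleGraph.fromRel_adj]
  constructor
  · rintro ⟨h, h2⟩
    exact ⟨by simpa [Fin.ext_iff] using h, by tauto⟩
  · rintro ⟨h, h2⟩
    exact ⟨by simpa [Fin.ext_iff] using h, by tauto⟩

lemma ds_edge_0i (n i : ℕ) (h1 : 1 ≤ i) (h2 : i ≤ n) :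
    s(vt n 0, vt n i) ∈ (doubleStar n).edgeSet := by
  rw [SimpleGraph.mem_edgeSet, ds_adj, vt_val n 0 (by omega), vt_val n i (by omega)]
  omega

lemma ds_edge_ii (n i : ℕ) (h1 : 1 ≤ i) (h2 : i ≤ n) :
    s(vt n i, vt n (n+i)) ∈ (doubleStar n).edgeSet := by
  rw [SimpleGraph.mem_edgeSet, ds_adj, vt_val n i (by omega), vt_val n (n+i) (by omega)]
  omega

lemma cg_adj_vt (n a b : ℕ) (ha : a ≤ 2*n) (hb : b ≤ 2*n) :
    (centralGraph (doubleStar n)).Adj (Sum.inl (vt n a)) (Sum.inl (vt n b)) ↔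
    (a ≠ b ∧ ¬((a=0 ∧ 1≤b ∧ b≤n) ∨ (b=0 ∧ 1≤a ∧ a≤n) ∨ (1≤a ∧ a≤n ∧ b=a+n) ∨ (1≤b ∧ b≤n ∧ a=b+n))) := by
  have h1 : ((vt n a):ℕ) = a := vt_val n a ha
  have h2 : ((vt n b):ℕ) = b := vt_val n b hb
  show (vt n a ≠ vt n b ∧ ¬(doubleStar n).Adj (vt n a) (vt n b)) ↔ _
  rw [ds_adj]
  simp only [ne_eq, Fin.ext_iff, h1, h2]
  tauto

lemma vt_mem (n a x y : ℕ) (ha : a ≤ 2*n) (hx : x ≤ 2*n) (hy : y ≤ 2*n) :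
    vt n a ∈ s(vt n x, vt n y) ↔ (a = x ∨ a = y) := by
  rw [Sym2.mem_iff]
  simp [Fin.ext_iff, vt_val n a ha, vt_val n x hx, vt_val n y hy]

lemma inl_vt_eq (n a b : ℕ) (ha : a ≤ 2*n) (hb : b ≤ 2*n) :
    (Sum.inl (vt n a) : Fin (2*n+1) ⊕ (doubleStar n).edgeSet) = Sum.inl (vt n b) ↔ a = b := by
  simp [Fin.ext_iff, vt_val n a ha, vt_val n b hb]
lemma lower (n : ℕ) (hn : 1 ≤ n) (f : Fin (2*n+1) ⊕ (doubleStar n).edgeSet → ℕ)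
    (hf : IsTDColoring (centralGraph (doubleStar n)) f) (hb : ∀ v, f v < n+2) : False := by
  obtain ⟨hprop, hdom⟩ := hf
  -- domination data for the subdivision vertex of edge {i, n+i}
  have hEdom : ∀ i, 1 ≤ i → i ≤ n → ∃ c, (∃ w, f w = c) ∧
      ∀ w, f w = c → w = Sum.inl (vt n i) ∨ w = Sum.inl (vt n (n+i)) := by
    intro i h1 h2
    obtain ⟨c, hw, hall⟩ := hdom (Sum.inr ⟨s(vt n i, vt n (n+i)), ds_edge_ii n i h1 h2⟩)
    refine ⟨c, hw, fun w hwc => ?_⟩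
    have h := hall w hwc
    cases w with
    | inl u =>
      have hu : u ∈ s(vt n i, vt n (n+i)) := h
      rcases Sym2.mem_iff.mp hu with h' | h'
      · exact Or.inl (by rw [h'])
      · exact Or.inr (by rw [h'])
    | inr e => exact absurd h (fun hh => hh)
  -- domination data for the subdivision vertex of edge {0, i}
  have hMdom : ∀ i, 1 ≤ i → i ≤ n → ∃ c, (∃ w, f w = c) ∧
      ∀ w, f w = c → w = Sum.inl (vt n 0) ∨ w = Sum.inl (vt n i) := by
    intro i h1 h2
    obtain ⟨c, hw, hall⟩ := hdom (Sum.inr ⟨s(vt n 0, vt n i), ds_edge_0i n i h1 h2⟩)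
    refine ⟨c, hw, fun w hwc => ?_⟩
    have h := hall w hwc
    cases w with
    | inl u =>
      have hu : u ∈ s(vt n 0, vt n i) := h
      rcases Sym2.mem_iff.mp hu with h' | h'
      · exact Or.inl (by rw [h'])
      · exact Or.inr (by rw [h'])
    | inr e => exact absurd h (fun hh => hh)
  choose D hD using hEdom
  choose C hC using hMdom
  -- distinctness of colors of the clique {v0} ∪ pendants, and leaf constraints
  have hc0p : ∀ i, 1 ≤ i → i ≤ n → f (Sum.inl (vt n 0)) ≠ f (Sum.inl (vt n (n+i))) := by
    intro i h1 h2
    exact hprop _ _ ((cg_adj_vt n 0 (n+i) (by omega) (by omega)).mpr (by omega))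
  have hpp : ∀ i j, 1 ≤ i → i ≤ n → 1 ≤ j → j ≤ n → i ≠ j →
      f (Sum.inl (vt n (n+i))) ≠ f (Sum.inl (vt n (n+j))) := by
    intro i j h1 h2 h3 h4 h5
    exact hprop _ _ ((cg_adj_vt n (n+i) (n+j) (by omega) (by omega)).mpr (by omega))
  have hLp : ∀ i j, 1 ≤ i → i ≤ n → 1 ≤ j → j ≤ n → i ≠ j →
      f (Sum.inl (vt n i)) ≠ f (Sum.inl (vt n (n+j))) := by
    intro i j h1 h2 h3 h4 h5
    exact hprop _ _ ((cg_adj_vt n i (n+j) (by omega) (by omega)).mpr (by omega))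
  -- uniqueness of the "extra" color
  have extra_unique : ∀ x y, x < n+2 → y < n+2 →
      x ≠ f (Sum.inl (vt n 0)) → y ≠ f (Sum.inl (vt n 0)) →
      (∀ j, 1 ≤ j → j ≤ n → x ≠ f (Sum.inl (vt n (n+j)))) →
      (∀ j, 1 ≤ j → j ≤ n → y ≠ f (Sum.inl (vt n (n+j)))) → x = y := by
    intro x y hx hy hxc hyc hxp hyp
    by_contra hxy
    classical
    set g : ℕ → ℕ := fun a => if a = 0 then f (Sum.inl (vt n 0)) else
      if a ≤ n then f (Sum.inl (vt n (n+a))) else if a = n+1 then x else y with hg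
    have hmaps : ∀ a ∈ Finset.range (n+3), g a ∈ Finset.range (n+2) := by
      intro a ha
      simp only [hg, Finset.mem_range] at *
      split_ifs
      · exact hb _
      · exact hb _
      · exact hx
      · exact hy
    have hinj : Set.InjOn g (Finset.range (n+3)) := by
      intro a ha b hb' hab
      simp only [Finset.coe_range, Set.mem_Iio] at ha hb'
      by_contra hne
      simp only [hg] at hab
      split_ifs at hab with h1 h2 h3 h4 h5 h6 h7 h8 h9 h10 h11 h12 h13 h14 h15
      all_goals first
      | omega
      | (exact hxy hab) | (exact hxy hab.symm)
      | (exact hxc hab.symm) | (exact hxc hab)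
      | (exact hyc hab.symm) | (exact hyc hab)
      | (exact hc0p _ (by omega) (by omega) hab) | (exact hc0p _ (by omega) (by omega) hab.symm)
      | (exact hpp _ _ (by omega) (by omega) (by omega) (by omega) (by omega) hab)
      | (exact hxp _ (by omega) (by omega) hab.symm) | (exact hxp _ (by omega) (by omega) hab)
      | (exact hyp _ (by omega) (by omega) hab.symm) | (exact hyp _ (by omega) (by omega) hab)
    have hcard := Finset.card_le_card_of_injOn g hmaps hinj
    simp only [Finset.card_range] at hcard
    omega
    -- basic facts about the colors D i
  have hDlt : ∀ i (h1 : 1 ≤ i) (h2 : i ≤ n), D i h1 h2 < n+2 := by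
    intro i h1 h2
    obtain ⟨w, hw⟩ := (hD i h1 h2).1
    rw [← hw]; exact hb w
  have hDc0 : ∀ i (h1 : 1 ≤ i) (h2 : i ≤ n), D i h1 h2 ≠ f (Sum.inl (vt n 0)) := by
    intro i h1 h2 h
    rcases (hD i h1 h2).2 (Sum.inl (vt n 0)) h.symm with h' | h'
    · exact absurd ((inl_vt_eq n 0 i (by omega) (by omega)).mp h') (by omega)
    · exact absurd ((inl_vt_eq n 0 (n+i) (by omega) (by omega)).mp h') (by omega)
  have hDp : ∀ i (h1 : 1 ≤ i) (h2 : i ≤ n), ∀ j, 1 ≤ j → j ≤ n → j ≠ i →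
      D i h1 h2 ≠ f (Sum.inl (vt n (n+j))) := by
    intro i h1 h2 j hj1 hj2 hji h
    rcases (hD i h1 h2).2 (Sum.inl (vt n (n+j))) h.symm with h' | h'
    · exact absurd ((inl_vt_eq n (n+j) i (by omega) (by omega)).mp h') (by omega)
    · exact absurd ((inl_vt_eq n (n+j) (n+i) (by omega) (by omega)).mp h') (by omega)
  have hDD : ∀ i (h1 : 1 ≤ i) (h2 : i ≤ n) j (g1 : 1 ≤ j) (g2 : j ≤ n), i ≠ j →
      D i h1 h2 ≠ D j g1 g2 := by
    intro i h1 h2 j g1 g2 hij h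
    obtain ⟨w, hw⟩ := (hD i h1 h2).1
    rcases (hD i h1 h2).2 w hw with h' | h' <;>
      rcases (hD j g1 g2).2 w (by rw [hw, h]) with h'' | h'' <;>
      exact absurd ((inl_vt_eq n _ _ (by omega) (by omega)).mp (h'.symm.trans h'')) (by omega)
  by_cases hA : ∃ i, ∃ h1 : 1 ≤ i, ∃ h2 : i ≤ n, D i h1 h2 ≠ f (Sum.inl (vt n (n+i)))
  · -- CASE A
    obtain ⟨i0, hi01, hi02, hDi0⟩ := hA
    have hDi0all : ∀ j, 1 ≤ j → j ≤ n → D i0 hi01 hi02 ≠ f (Sum.inl (vt n (n+j))) := by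
      intro j hj1 hj2
      by_cases hji : j = i0
      · subst hji; exact hDi0
      · exact hDp i0 hi01 hi02 j hj1 hj2 hji
    have hDrest : ∀ i (h1 : 1 ≤ i) (h2 : i ≤ n), i ≠ i0 → D i h1 h2 = f (Sum.inl (vt n (n+i))) := by
      intro i h1 h2 hii0
      by_contra hne
      have heq : D i h1 h2 = D i0 hi01 hi02 := by
        refine extra_unique _ _ (hDlt i h1 h2) (hDlt i0 hi01 hi02) (hDc0 i h1 h2) (hDc0 i0 hi01 hi02)
          (fun j hj1 hj2 => ?_) hDi0all
        by_cases hji : j = i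
        · subst hji; exact hne
        · exact hDp i h1 h2 j hj1 hj2 hji
      exact hDD i h1 h2 i0 hi01 hi02 hii0 heq
    by_cases hCc0 : ∃ i, ∃ h1 : 1 ≤ i, ∃ h2 : i ≤ n, C i h1 h2 = f (Sum.inl (vt n 0))
    · -- subcase A-a : some class(c0) ⊆ {v0, leaf i1}
      obtain ⟨i1, hi11, hi12, hCi1⟩ := hCc0
      have Hc0 : ∀ w, f w = f (Sum.inl (vt n 0)) → w = Sum.inl (vt n 0) ∨ w = Sum.inl (vt n i1) :=
        fun w hw => (hC i1 hi11 hi12).2 w (hw.trans hCi1.symm)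
      set x : Fin (2*n+1) ⊕ (doubleStar n).edgeSet :=
        Sum.inr ⟨s(vt n i0, vt n (n+i0)), ds_edge_ii n i0 hi01 hi02⟩ with hxdef
      have hx1 : f x ≠ f (Sum.inl (vt n 0)) := by
        intro h; rcases Hc0 x h with h' | h' <;> exact Sum.inr_ne_inl h'
      have hx3 : f x ≠ D i0 hi01 hi02 := by
        intro h; rcases (hD i0 hi01 hi02).2 x h with h' | h' <;> exact Sum.inr_ne_inl h'
      have hx4 : f x = f (Sum.inl (vt n (n+i0))) := by
        by_contra hne
        refine hx3 (extra_unique _ _ (hb x) (hDlt i0 hi01 hi02) hx1 (hDc0 i0 hi01 hi02)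
          (fun j hj1 hj2 => ?_) hDi0all)
        by_cases hji : j = i0
        · subst hji; exact hne
        · intro h
          have := (hD j hj1 hj2).2 x (h.trans (hDrest j hj1 hj2 hji).symm)
          rcases this with h' | h' <;> exact Sum.inr_ne_inl h'
      have hadj : (centralGraph (doubleStar n)).Adj x (Sum.inl (vt n (n+i0))) :=
        (vt_mem n (n+i0) i0 (n+i0) (by omega) (by omega) (by omega)).mpr (Or.inr rfl)
      exact hprop x (Sum.inl (vt n (n+i0))) hadj hx4
    · -- subcase A-b : no C i equals c0
      push_neg at hCc0
      have hCL : ∀ i (h1 : 1 ≤ i) (h2 : i ≤ n), C i h1 h2 = f (Sum.inl (vt n i)) := by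
        intro i h1 h2
        obtain ⟨w, hw⟩ := (hC i h1 h2).1
        rcases (hC i h1 h2).2 w hw with h' | h'
        · exact absurd (by rw [← hw, h'] : C i h1 h2 = f (Sum.inl (vt n 0))) (hCc0 i h1 h2)
        · rw [← hw, h']
      have hLextra : ∀ i (h1 : 1 ≤ i) (h2 : i ≤ n),
          f (Sum.inl (vt n i)) ≠ f (Sum.inl (vt n 0)) ∧
          ∀ j, 1 ≤ j → j ≤ n → f (Sum.inl (vt n i)) ≠ f (Sum.inl (vt n (n+j))) := by
        intro i h1 h2
        constructor
        · rw [← hCL i h1 h2]; exact hCc0 i h1 h2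
        · intro j hj1 hj2 h
          by_cases hji : j = i
          · have hmemc : f (Sum.inl (vt n (n+j))) = C i h1 h2 := by
              rw [hCL i h1 h2, ← h]
            rcases (hC i h1 h2).2 _ hmemc with h' | h'
            · exact absurd ((inl_vt_eq n (n+j) 0 (by omega) (by omega)).mp h') (by omega)
            · exact absurd ((inl_vt_eq n (n+j) i (by omega) (by omega)).mp h') (by omega)
          · exact hLp i j h1 h2 hj1 hj2 (fun hh => hji hh.symm) h
      have hLD : ∀ i, 1 ≤ i → i ≤ n → i = i0 := by
        intro i h1 h2
        have hx := extra_unique (f (Sum.inl (vt n i))) (D i0 hi01 hi02) (hb _) (hDlt i0 hi01 hi02)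
          (hLextra i h1 h2).1 (hDc0 i0 hi01 hi02) (hLextra i h1 h2).2 hDi0all
        rcases (hD i0 hi01 hi02).2 _ hx with h' | h'
        · exact (inl_vt_eq n i i0 (by omega) (by omega)).mp h'
        · exact absurd ((inl_vt_eq n i (n+i0) (by omega) (by omega)).mp h') (by omega)
      rcases Nat.lt_or_ge 1 n with hn2 | hn1
      · have e1 := hLD 1 (le_refl 1) (by omega)
        have e2 := hLD 2 (by omega) (by omega)
        omega
      · -- n = 1
        have hi0 : i0 = 1 := by omega
        subst hi0
        have hfL1 : f (Sum.inl (vt n 1)) = D 1 hi01 hi02 :=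
          extra_unique _ _ (hb _) (hDlt 1 hi01 hi02) (hLextra 1 hi01 hi02).1 (hDc0 1 hi01 hi02)
            (hLextra 1 hi01 hi02).2 hDi0all
        obtain ⟨γ, ⟨w0, hw0⟩, hγ⟩ := hdom (Sum.inl (vt n 1))
        by_cases hγ1 : γ = f (Sum.inl (vt n 0))
        · have := hγ (Sum.inl (vt n 0)) hγ1.symm
          exact absurd this (by rw [cg_adj_vt n 1 0 (by omega) (by omega)]; omega)
        by_cases hγ2 : γ = f (Sum.inl (vt n (n+1)))
        · have := hγ (Sum.inl (vt n (n+1))) hγ2.symm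
          exact absurd this (by rw [cg_adj_vt n 1 (n+1) (by omega) (by omega)]; omega)
        · have hγp : ∀ j, 1 ≤ j → j ≤ n → γ ≠ f (Sum.inl (vt n (n+j))) := by
            intro j hj1 hj2 h
            have hj : j = 1 := by omega
            subst hj; exact hγ2 h
          have hγD : γ = D 1 hi01 hi02 :=
            extra_unique _ _ (hw0 ▸ hb w0) (hDlt 1 hi01 hi02) hγ1 (hDc0 1 hi01 hi02) hγp hDi0all
          have hw0D : f w0 = D 1 hi01 hi02 := hw0.trans hγD
          rcases (hD 1 hi01 hi02).2 w0 hw0D with h' | h'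
          · have := hγ w0 hw0
            rw [h'] at this
            exact (centralGraph (doubleStar n)).loopless.irrefl _ this
          · have hmemc : f w0 = C 1 hi01 hi02 := by rw [hw0D, ← hfL1, ← hCL 1 hi01 hi02]
            rcases (hC 1 hi01 hi02).2 w0 hmemc with h'' | h''
            · rw [h'] at h''
              exact absurd ((inl_vt_eq n (n+1) 0 (by omega) (by omega)).mp h'') (by omega)
            · rw [h'] at h''
              exact absurd ((inl_vt_eq n (n+1) 1 (by omega) (by omega)).mp h'') (by omega)
  · -- CASE B : every D i equals p i
    push_neg at hA
    have Pcl : ∀ i (h1 : 1 ≤ i) (h2 : i ≤ n), ∀ w, f w = f (Sum.inl (vt n (n+i))) →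
        w = Sum.inl (vt n i) ∨ w = Sum.inl (vt n (n+i)) :=
      fun i h1 h2 w hw => (hD i h1 h2).2 w (by rw [hw, hA i h1 h2])
    -- B1 : every C i equals c0
    have hCc0 : ∀ i (h1 : 1 ≤ i) (h2 : i ≤ n), C i h1 h2 = f (Sum.inl (vt n 0)) := by
      intro i h1 h2
      by_contra hne
      obtain ⟨w, hw⟩ := (hC i h1 h2).1
      have hCL : C i h1 h2 = f (Sum.inl (vt n i)) := by
        rcases (hC i h1 h2).2 w hw with h' | h'
        · exact absurd (by rw [← hw, h'] : C i h1 h2 = f (Sum.inl (vt n 0))) hne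
        · rw [← hw, h']
      have hLne_c0 : f (Sum.inl (vt n i)) ≠ f (Sum.inl (vt n 0)) := by
        rw [← hCL]; exact hne
      have hLp' : ∀ j, 1 ≤ j → j ≤ n → f (Sum.inl (vt n i)) ≠ f (Sum.inl (vt n (n+j))) := by
        intro j hj1 hj2 h
        by_cases hji : j = i
        · have hmemc : f (Sum.inl (vt n (n+j))) = C i h1 h2 := by rw [hCL, ← h]
          rcases (hC i h1 h2).2 _ hmemc with h' | h'
          · exact absurd ((inl_vt_eq n (n+j) 0 (by omega) (by omega)).mp h') (by omega)
          · exact absurd ((inl_vt_eq n (n+j) i (by omega) (by omega)).mp h') (by omega)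
        · exact hLp i j h1 h2 hj1 hj2 (fun hh => hji hh.symm) h
      set y : Fin (2*n+1) ⊕ (doubleStar n).edgeSet :=
        Sum.inr ⟨s(vt n 0, vt n i), ds_edge_0i n i h1 h2⟩ with hydef
      have hy_c0 : f y ≠ f (Sum.inl (vt n 0)) := by
        intro h
        have hadj : (centralGraph (doubleStar n)).Adj y (Sum.inl (vt n 0)) :=
          (vt_mem n 0 0 i (by omega) (by omega) (by omega)).mpr (Or.inl rfl)
        exact hprop y (Sum.inl (vt n 0)) hadj h
      have hy_p : ∀ j, 1 ≤ j → j ≤ n → f y ≠ f (Sum.inl (vt n (n+j))) := by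
        intro j hj1 hj2 h
        rcases Pcl j hj1 hj2 y h with h' | h' <;> exact Sum.inr_ne_inl h'
      have hyL : f y = f (Sum.inl (vt n i)) :=
        extra_unique _ _ (hb y) (hb _) hy_c0 hLne_c0 hy_p hLp'
      rcases (hC i h1 h2).2 y (by rw [hyL, ← hCL]) with h' | h' <;> exact Sum.inr_ne_inl h'
    have Hc0 : ∀ i (h1 : 1 ≤ i) (h2 : i ≤ n), ∀ w, f w = f (Sum.inl (vt n 0)) →
        w = Sum.inl (vt n 0) ∨ w = Sum.inl (vt n i) :=
      fun i h1 h2 w hw => (hC i h1 h2).2 w (hw.trans (hCc0 i h1 h2).symm)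
    -- no subdivision vertex is colored c0 or any p j
    have hsub : ∀ e : (doubleStar n).edgeSet, f (Sum.inr e) ≠ f (Sum.inl (vt n 0)) ∧
        ∀ j, 1 ≤ j → j ≤ n → f (Sum.inr e) ≠ f (Sum.inl (vt n (n+j))) := by
      intro e
      constructor
      · intro h
        rcases Hc0 1 (le_refl 1) hn _ h with h' | h' <;> exact Sum.inr_ne_inl h'
      · intro j h1 h2 h
        rcases Pcl j h1 h2 _ h with h' | h' <;> exact Sum.inr_ne_inl h'
    -- B2 : each leaf is colored c0 or its own pendant color
    have hleaf : ∀ i (h1 : 1 ≤ i) (h2 : i ≤ n),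
        f (Sum.inl (vt n i)) = f (Sum.inl (vt n 0)) ∨
        f (Sum.inl (vt n i)) = f (Sum.inl (vt n (n+i))) := by
      intro i h1 h2
      by_cases hc : f (Sum.inl (vt n i)) = f (Sum.inl (vt n 0))
      · exact Or.inl hc
      by_cases hp : f (Sum.inl (vt n i)) = f (Sum.inl (vt n (n+i)))
      · exact Or.inr hp
      exfalso
      have hz := hsub ⟨s(vt n i, vt n (n+i)), ds_edge_ii n i h1 h2⟩
      have heq : f (Sum.inl (vt n i)) =
          f (Sum.inr ⟨s(vt n i, vt n (n+i)), ds_edge_ii n i h1 h2⟩) := by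
        refine extra_unique _ _ (hb _) (hb _) hc hz.1 (fun j hj1 hj2 hh => ?_) hz.2
        by_cases hji : j = i
        · subst hji; exact hp hh
        · exact hLp i j h1 h2 hj1 hj2 (fun hh2 => hji hh2.symm) hh
      have hadj : (centralGraph (doubleStar n)).Adj (Sum.inl (vt n i))
          (Sum.inr ⟨s(vt n i, vt n (n+i)), ds_edge_ii n i h1 h2⟩) :=
        (vt_mem n i i (n+i) (by omega) (by omega) (by omega)).mpr (Or.inl rfl)
      exact hprop _ _ hadj heq
    by_cases hj1ex : ∃ i, ∃ h1 : 1 ≤ i, ∃ h2 : i ≤ n,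
        f (Sum.inl (vt n i)) = f (Sum.inl (vt n 0))
    · -- some leaf colored c0
      obtain ⟨j1, hj11, hj12, hj1c⟩ := hj1ex
      rcases Nat.lt_or_ge 1 n with hn2 | hn1
      · -- n ≥ 2 : impossible
        rcases eq_or_ne j1 1 with h | h
        · rcases Hc0 2 (by omega) (by omega) _ hj1c with h' | h'
          · exact absurd ((inl_vt_eq n j1 0 (by omega) (by omega)).mp h') (by omega)
          · exact absurd ((inl_vt_eq n j1 2 (by omega) (by omega)).mp h') (by omega)
        · rcases Hc0 1 (le_refl 1) hn _ hj1c with h' | h'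
          · exact absurd ((inl_vt_eq n j1 0 (by omega) (by omega)).mp h') (by omega)
          · exact absurd ((inl_vt_eq n j1 1 (by omega) (by omega)).mp h') (by omega)
      · -- n = 1
        have hj1' : j1 = 1 := by omega
        subst hj1'
        obtain ⟨ε, ⟨w0, hw0⟩, hε⟩ := hdom (Sum.inl (vt n (n+1)))
        by_cases he1 : ε = f (Sum.inl (vt n 0))
        · have := hε (Sum.inl (vt n 1)) (hj1c.trans he1.symm)
          exact absurd this (by rw [cg_adj_vt n (n+1) 1 (by omega) (by omega)]; omega)
        by_cases he2 : ε = f (Sum.inl (vt n (n+1)))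
        · have := hε (Sum.inl (vt n (n+1))) he2.symm
          exact (centralGraph (doubleStar n)).loopless.irrefl _ this
        · have hz := hsub ⟨s(vt n 0, vt n 1), ds_edge_0i n 1 (le_refl 1) hn⟩
          have hεz : ε = f (Sum.inr ⟨s(vt n 0, vt n 1), ds_edge_0i n 1 (le_refl 1) hn⟩) := by
            refine extra_unique _ _ (hw0 ▸ hb w0) (hb _) he1 hz.1 (fun j hj1 hj2 h => ?_) hz.2
            have hj : j = 1 := by omega
            subst hj; exact he2 h
          have hadj := hε _ hεz.symm
          have hmm : vt n (n+1) ∈ s(vt n 0, vt n 1) := hadj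
          rw [vt_mem n (n+1) 0 1 (by omega) (by omega) (by omega)] at hmm
          omega
    · -- all leaves colored with their pendant's color
      push_neg at hj1ex
      have hallp : ∀ i (h1 : 1 ≤ i) (h2 : i ≤ n),
          f (Sum.inl (vt n i)) = f (Sum.inl (vt n (n+i))) :=
        fun i h1 h2 => (hleaf i h1 h2).resolve_left (hj1ex i h1 h2)
      obtain ⟨γ, ⟨w0, hw0⟩, hγ⟩ := hdom (Sum.inl (vt n 0))
      by_cases hg1 : γ = f (Sum.inl (vt n 0))
      · exact (centralGraph (doubleStar n)).loopless.irrefl _ (hγ _ hg1.symm)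
      have hgp : ∀ j, 1 ≤ j → j ≤ n → γ ≠ f (Sum.inl (vt n (n+j))) := by
        intro j h1 h2 h
        have := hγ (Sum.inl (vt n j)) (by rw [hallp j h1 h2, ← h])
        exact absurd this (by rw [cg_adj_vt n 0 j (by omega) (by omega)]; omega)
      have hz := hsub ⟨s(vt n 1, vt n (n+1)), ds_edge_ii n 1 (le_refl 1) hn⟩
      have hγz : γ = f (Sum.inr ⟨s(vt n 1, vt n (n+1)), ds_edge_ii n 1 (le_refl 1) hn⟩) :=
        extra_unique _ _ (hw0 ▸ hb w0) (hb _) hg1 hz.1 hgp hz.2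
      have hadj := hγ _ hγz.symm
      have hmm : vt n 0 ∈ s(vt n 1, vt n (n+1)) := hadj
      rw [vt_mem n 0 1 (n+1) (by omega) (by omega) (by omega)] at hmm
      omega

open Classical in
noncomputable def col (n : ℕ) : Fin (2*n+1) ⊕ (doubleStar n).edgeSet → ℕ :=
  Sum.elim
    (fun v => if (v:ℕ) = 0 then n else if (v:ℕ) ≤ n then (v:ℕ) - 1 else (v:ℕ) - n - 1)
    (fun e => if vt n 0 ∈ (e : Sym2 (Fin (2*n+1))) ∧ vt n 1 ∈ (e : Sym2 (Fin (2*n+1)))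
      then n+2 else n+1)

lemma ds_edge_cases (n : ℕ) (e : Sym2 (Fin (2*n+1))) (he : e ∈ (doubleStar n).edgeSet) :
    ∃ i, 1 ≤ i ∧ i ≤ n ∧ (e = s(vt n 0, vt n i) ∨ e = s(vt n i, vt n (n+i))) := by
  induction e using Sym2.ind with
  | _ a b =>
    rw [SimpleGraph.mem_edgeSet, ds_adj] at he
    have ha := a.isLt
    have hb := b.isLt
    obtain ⟨hne, h | h | h | h⟩ := he
    · refine ⟨(b:ℕ), h.2.1, h.2.2, Or.inl ?_⟩
      have h0 : a = vt n 0 := Fin.ext (by rw [vt_val n 0 (by omega)]; omega)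
      have hbb : b = vt n (b:ℕ) := Fin.ext (by rw [vt_val n (b:ℕ) (by omega)])
      rw [← h0, ← hbb]
    · refine ⟨(a:ℕ), h.2.1, h.2.2, Or.inl ?_⟩
      have h0 : b = vt n 0 := Fin.ext (by rw [vt_val n 0 (by omega)]; omega)
      have haa : a = vt n (a:ℕ) := Fin.ext (by rw [vt_val n (a:ℕ) (by omega)])
      rw [Sym2.eq_swap, ← h0, ← haa]
    · refine ⟨(a:ℕ), h.1, h.2.1, Or.inr ?_⟩
      have haa : a = vt n (a:ℕ) := Fin.ext (by rw [vt_val n (a:ℕ) (by omega)])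
      have hbb : b = vt n (n+(a:ℕ)) := Fin.ext (by rw [vt_val n (n+(a:ℕ)) (by omega)]; omega)
      rw [← haa, ← hbb]
    · refine ⟨(b:ℕ), h.1, h.2.1, Or.inr ?_⟩
      have hbb : b = vt n (b:ℕ) := Fin.ext (by rw [vt_val n (b:ℕ) (by omega)])
      have haa : a = vt n (n+(b:ℕ)) := Fin.ext (by rw [vt_val n (n+(b:ℕ)) (by omega)]; omega)
      rw [Sym2.eq_swap, ← hbb, ← haa]

lemma upper (n : ℕ) (hn : 1 ≤ n) :
    IsTDColoring (centralGraph (doubleStar n)) (col n) ∧ ∀ v, col n v < n+3 := by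
  have hcol_inl : ∀ v : Fin (2*n+1), col n (Sum.inl v) ≤ n := by
    intro v; have := v.isLt; simp only [col, Sum.elim_inl]; split_ifs <;> omega
  have hKn2 : ∀ w, col n w = n+2 → (centralGraph (doubleStar n)).Adj (Sum.inl (vt n 0)) w := by
    intro w hw
    cases w with
    | inl v => have := hcol_inl v; omega
    | inr e =>
      simp only [col, Sum.elim_inr] at hw
      split_ifs at hw with hcond
      · exact hcond.1
      · omega
  have hKn : ∀ w, col n w = n → w = Sum.inl (vt n 0) := by
    intro w hw
    cases w with
    | inl v =>
      have hv := v.isLt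
      simp only [col, Sum.elim_inl] at hw
      split_ifs at hw with hc1 hc2
      · have : v = vt n 0 := Fin.ext (by rw [vt_val n 0 (by omega)]; exact hc1)
        rw [this]
      · omega
      · omega
    | inr e => simp only [col, Sum.elim_inr] at hw; split_ifs at hw <;> omega
  have hKj : ∀ j, 1 ≤ j → j ≤ n → ∀ w, col n w = j-1 →
      w = Sum.inl (vt n j) ∨ w = Sum.inl (vt n (n+j)) := by
    intro j hj1 hj2 w hw
    cases w with
    | inl v =>
      have hv := v.isLt
      simp only [col, Sum.elim_inl] at hw
      split_ifs at hw with hc1 hc2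
      · omega
      · have : v = vt n j := Fin.ext (by rw [vt_val n j (by omega)]; omega)
        exact Or.inl (by rw [this])
      · have : v = vt n (n+j) := Fin.ext (by rw [vt_val n (n+j) (by omega)]; omega)
        exact Or.inr (by rw [this])
    | inr e => simp only [col, Sum.elim_inr] at hw; split_ifs at hw <;> omega
  have hKn1 : ∀ w, col n w = n+1 → ∃ e : (doubleStar n).edgeSet, w = Sum.inr e ∧
      ¬(vt n 0 ∈ (e : Sym2 (Fin (2*n+1))) ∧ vt n 1 ∈ (e : Sym2 (Fin (2*n+1)))) := by
    intro w hw
    cases w with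
    | inl v => have := hcol_inl v; omega
    | inr e =>
      simp only [col, Sum.elim_inr] at hw
      split_ifs at hw with hc
      · omega
      · exact ⟨e, rfl, hc⟩
  have hwit0 : col n (Sum.inl (vt n 0)) = n := by
    simp only [col, Sum.elim_inl]
    rw [if_pos (vt_val n 0 (by omega))]
  have hwitj : ∀ j, 1 ≤ j → j ≤ n → col n (Sum.inl (vt n j)) = j - 1 := by
    intro j h1 h2
    simp only [col, Sum.elim_inl, vt_val n j (by omega)]
    rw [if_neg (by omega), if_pos h2]
  have hwitms1 : col n (Sum.inr ⟨s(vt n 0, vt n 1), ds_edge_0i n 1 (le_refl 1) hn⟩) = n+2 := by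
    simp only [col, Sum.elim_inr]
    rw [if_pos ⟨(vt_mem n 0 0 1 (by omega) (by omega) (by omega)).mpr (Or.inl rfl),
      (vt_mem n 1 0 1 (by omega) (by omega) (by omega)).mpr (Or.inr rfl)⟩]
  have hwites1 : col n (Sum.inr ⟨s(vt n 1, vt n (n+1)), ds_edge_ii n 1 (le_refl 1) hn⟩) = n+1 := by
    simp only [col, Sum.elim_inr]
    rw [if_neg]
    rintro ⟨ha, -⟩
    rw [vt_mem n 0 1 (n+1) (by omega) (by omega) (by omega)] at ha
    omega
  refine ⟨⟨?_, ?_⟩, ?_⟩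
  · -- proper
    rintro (u | e) (v | e') hadj
    · obtain ⟨h1, h2⟩ := hadj
      rw [ds_adj] at h2
      have h1' : (u:ℕ) ≠ (v:ℕ) := fun hh => h1 (Fin.ext hh)
      have hu := u.isLt; have hv := v.isLt
      simp only [col, Sum.elim_inl]
      split_ifs <;> omega
    · have hu := u.isLt
      simp only [col, Sum.elim_inl, Sum.elim_inr]
      split_ifs <;> omega
    · have hv := v.isLt
      simp only [col, Sum.elim_inl, Sum.elim_inr]
      split_ifs <;> omega
    · exact hadj.elim
  · -- total domination
    intro v
    cases v with
    | inl u =>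
      have hu := u.isLt
      have hueq : u = vt n (u:ℕ) := Fin.ext (vt_val n (u:ℕ) (by omega)).symm
      by_cases h0 : (u:ℕ) = 0
      · refine ⟨n+2, ⟨_, hwitms1⟩, fun w hw => ?_⟩
        have hadj := hKn2 w hw
        have hu0 : u = vt n 0 := Fin.ext (by rw [vt_val n 0 (by omega)]; exact h0)
        rw [hu0]; exact hadj
      · by_cases hle : (u:ℕ) ≤ n
        · rcases Nat.lt_or_ge 1 n with hn2 | hn1
          · rcases eq_or_ne (u:ℕ) 1 with h1 | h1
            · refine ⟨2-1, ⟨_, hwitj 2 (by omega) (by omega)⟩, fun w hw => ?_⟩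
              rcases hKj 2 (by omega) (by omega) w hw with h' | h' <;> rw [h', hueq]
              · exact (cg_adj_vt n (u:ℕ) 2 (by omega) (by omega)).mpr (by omega)
              · exact (cg_adj_vt n (u:ℕ) (n+2) (by omega) (by omega)).mpr (by omega)
            · refine ⟨1-1, ⟨_, hwitj 1 (by omega) (by omega)⟩, fun w hw => ?_⟩
              rcases hKj 1 (by omega) (by omega) w hw with h' | h' <;> rw [h', hueq]
              · exact (cg_adj_vt n (u:ℕ) 1 (by omega) (by omega)).mpr (by omega)
              · exact (cg_adj_vt n (u:ℕ) (n+1) (by omega) (by omega)).mpr (by omega)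
          · refine ⟨n+1, ⟨_, hwites1⟩, fun w hw => ?_⟩
            obtain ⟨e, rfl, hcond⟩ := hKn1 w hw
            obtain ⟨i, hi1, hi2, hcase | hcase⟩ := ds_edge_cases n (e : Sym2 _) e.2
            · exfalso
              apply hcond
              have hi : i = 1 := by omega
              subst hi
              exact ⟨by rw [hcase]; exact (vt_mem n 0 0 1 (by omega) (by omega) (by omega)).mpr (Or.inl rfl),
                by rw [hcase]; exact (vt_mem n 1 0 1 (by omega) (by omega) (by omega)).mpr (Or.inr rfl)⟩
            · show u ∈ (e : Sym2 (Fin (2*n+1)))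
              rw [hcase, hueq]
              exact (vt_mem n (u:ℕ) i (n+i) (by omega) (by omega) (by omega)).mpr (Or.inl (by omega))
        · rcases Nat.lt_or_ge 1 n with hn2 | hn1
          · rcases eq_or_ne (u:ℕ) (n+1) with h1 | h1
            · refine ⟨2-1, ⟨_, hwitj 2 (by omega) (by omega)⟩, fun w hw => ?_⟩
              rcases hKj 2 (by omega) (by omega) w hw with h' | h' <;> rw [h', hueq]
              · exact (cg_adj_vt n (u:ℕ) 2 (by omega) (by omega)).mpr (by omega)
              · exact (cg_adj_vt n (u:ℕ) (n+2) (by omega) (by omega)).mpr (by omega)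
            · refine ⟨1-1, ⟨_, hwitj 1 (by omega) (by omega)⟩, fun w hw => ?_⟩
              rcases hKj 1 (by omega) (by omega) w hw with h' | h' <;> rw [h', hueq]
              · exact (cg_adj_vt n (u:ℕ) 1 (by omega) (by omega)).mpr (by omega)
              · exact (cg_adj_vt n (u:ℕ) (n+1) (by omega) (by omega)).mpr (by omega)
          · refine ⟨n+1, ⟨_, hwites1⟩, fun w hw => ?_⟩
            obtain ⟨e, rfl, hcond⟩ := hKn1 w hw
            obtain ⟨i, hi1, hi2, hcase | hcase⟩ := ds_edge_cases n (e : Sym2 _) e.2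
            · exfalso
              apply hcond
              have hi : i = 1 := by omega
              subst hi
              exact ⟨by rw [hcase]; exact (vt_mem n 0 0 1 (by omega) (by omega) (by omega)).mpr (Or.inl rfl),
                by rw [hcase]; exact (vt_mem n 1 0 1 (by omega) (by omega) (by omega)).mpr (Or.inr rfl)⟩
            · show u ∈ (e : Sym2 (Fin (2*n+1)))
              rw [hcase, hueq]
              exact (vt_mem n (u:ℕ) i (n+i) (by omega) (by omega) (by omega)).mpr (Or.inr (by omega))
    | inr e =>
      obtain ⟨i, hi1, hi2, hcase | hcase⟩ := ds_edge_cases n (e : Sym2 _) e.2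
      · refine ⟨n, ⟨_, hwit0⟩, fun w hw => ?_⟩
        rw [hKn w hw]
        show vt n 0 ∈ (e : Sym2 (Fin (2*n+1)))
        rw [hcase]
        exact (vt_mem n 0 0 i (by omega) (by omega) (by omega)).mpr (Or.inl rfl)
      · refine ⟨i-1, ⟨_, hwitj i hi1 hi2⟩, fun w hw => ?_⟩
        rcases hKj i hi1 hi2 w hw with h' | h' <;> rw [h']
        · show vt n i ∈ (e : Sym2 (Fin (2*n+1)))
          rw [hcase]
          exact (vt_mem n i i (n+i) (by omega) (by omega) (by omega)).mpr (Or.inl rfl)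
        · show vt n (n+i) ∈ (e : Sym2 (Fin (2*n+1)))
          rw [hcase]
          exact (vt_mem n (n+i) i (n+i) (by omega) (by omega) (by omega)).mpr (Or.inr rfl)
  · -- bound
    intro v
    cases v with
    | inl u => have := hcol_inl u; omega
    | inr e => simp only [col, Sum.elim_inr]; split_ifs <;> omega

theorem tdcn_central_double_star (n : ℕ) (hn : 1 ≤ n) :
    tdcn (centralGraph (doubleStar n)) = n + 3 := by
  have hmem : (n+3) ∈ {k | ∃ f : Fin (2*n+1) ⊕ (doubleStar n).edgeSet → ℕ,
      IsTDColoring (centralGraph (doubleStar n)) f ∧ ∀ v, f v < k} :=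
    ⟨col n, (upper n hn).1, (upper n hn).2⟩
  unfold tdcn
  apply le_antisymm
  · exact Nat.sInf_le hmem
  · apply le_csInf ⟨_, hmem⟩
    intro k hk
    obtain ⟨f, hf, hfb⟩ := hk
    by_contra hlt
    push_neg at hlt
    exact lower n hn f hf (fun v => lt_of_lt_of_le (hfb v) (by omega))
end
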